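/- arXiv:2007.11030 — 10 statements merged into one kernel-verified Lean document; each statement's English description precedes it below -/
import Mathlib

section
/- Let X be an integer-valued random variable with finite variance Var(X). Then M(X) ≥ 1/√(1 + 12·Var(X)); equivalently, 1 ≤ N_∞(X) ≤ 1 + 12·Var(X). (Theorem 1.1, lower bound / Corollary 3.2.) -/
/-
Bathtub principle: every atom of `X` has mass at most `M = M(X)`, and `r² - (k - c)² ≤ 0` for the
integers `k` outside a window `W` that contains those within distance `r` of `c`, so
`r² - E(X - c)² ≤ M · ∑_{k ∈ W} (r² - (k - c)²)`. With `c = EX`, `W` the `n = ⌊1/M⌋` integers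
nearest to `c` and `r` the distance from `c` to the nearest integer outside `W`, this reads
`Var X ≥ r²(1 - nM) + nM(w² + (n² - 1)/12)`, where `w` is the offset of `c` from the midpoint of
`W`: the variance of the extremal law (mass `M` on each point of `W`, the rest at distance `r`).
That this is at least `(M⁻² - 1)/12` is a sum-of-squares identity in `M`, `1 - nM` and `w`.
-/

open MeasureTheory ProbabilityTheory Real

/-- The probability mass function of an integer-valued random variable `X`
on a probability space `(Ω, μ)`: `f(k) = P{X = k}`. -/
noncomputable def pmfOf {Ω : Type*} [MeasurableSpace Ω] (μ : Measure Ω) (X : Ω → ℤ)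
    (k : ℤ) : ℝ :=
  (μ (X ⁻¹' {k})).toReal

/-- A probability function `f : ℤ → ℝ` is discrete log-concave: it is non-negative,
its support is an integer interval, and `f(k)^2 ≥ f(k-1)·f(k+1)` for all `k`. -/
def IsDiscreteLogConcavePMF (f : ℤ → ℝ) : Prop :=
  (∀ k : ℤ, 0 ≤ f k) ∧
  (∀ k l m : ℤ, k ≤ l → l ≤ m → 0 < f k → 0 < f m → 0 < f l) ∧
  (∀ k : ℤ, f (k - 1) * f (k + 1) ≤ f k ^ 2)

/-- `M(X) = sup_{k ∈ ℤ} P{X = k}`. -/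
noncomputable def maxProb {Ω : Type*} [MeasurableSpace Ω] (μ : Measure Ω) (X : Ω → ℤ) : ℝ :=
  ⨆ k : ℤ, pmfOf μ X k

open Finset

section MaxProb

variable {Ω : Type*} [MeasurableSpace Ω] {μ : Measure Ω} {X : Ω → ℤ}

lemma bddAbove_range_pmfOf [IsFiniteMeasure μ] : BddAbove (Set.range (pmfOf μ X)) :=
  ⟨μ.real Set.univ, by rintro _ ⟨k, rfl⟩; exact measureReal_mono (Set.subset_univ _)⟩

lemma pmfOf_le_maxProb [IsFiniteMeasure μ] (k : ℤ) : pmfOf μ X k ≤ maxProb μ X :=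
  le_ciSup bddAbove_range_pmfOf k

lemma maxProb_le_one [IsProbabilityMeasure μ] : maxProb μ X ≤ 1 :=
  ciSup_le fun _ => measureReal_le_one

lemma maxProb_pos [IsFiniteMeasure μ] [NeZero μ] : 0 < maxProb μ X := by
  obtain ⟨k, hk⟩ : ∃ k, μ (X ⁻¹' {k}) ≠ 0 := by
    by_contra! h
    have hnull := measure_iUnion_null h
    rw [← Set.preimage_iUnion, Set.iUnion_of_singleton, Set.preimage_univ] at hnull
    exact NeZero.ne μ (Measure.measure_univ_eq_zero.mp hnull)
  exact (ENNReal.toReal_pos hk (measure_ne_top _ _)).trans_le (pmfOf_le_maxProb k)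

lemma integral_comp_le_maxProb_mul_sum [IsFiniteMeasure μ] (hX : Measurable X) {φ : ℤ → ℝ}
    {F : Finset ℤ} (hφF : ∀ k ∈ F, 0 ≤ φ k) (hφ : ∀ k ∉ F, φ k ≤ 0)
    (hint : Integrable (fun ω => φ (X ω)) μ) :
    ∫ ω, φ (X ω) ∂μ ≤ maxProb μ X * ∑ k ∈ F, φ k := by
  have hind (k : ℤ) : Integrable ((X ⁻¹' {k}).indicator fun _ => φ k) μ :=
    (integrable_const _).indicator (hX (measurableSet_singleton k))
  have hpoint (ω : Ω) : φ (X ω) ≤ ∑ k ∈ F, (X ⁻¹' {k}).indicator (fun _ => φ k) ω := by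
    classical
    simp only [Set.indicator_apply, Set.mem_preimage, Set.mem_singleton_iff, sum_ite_eq]
    split_ifs with h
    exacts [le_rfl, hφ _ h]
  calc ∫ ω, φ (X ω) ∂μ
      ≤ ∫ ω, ∑ k ∈ F, (X ⁻¹' {k}).indicator (fun _ => φ k) ω ∂μ :=
        integral_mono hint (integrable_finsetSum _ fun k _ => hind k) hpoint
    _ = ∑ k ∈ F, pmfOf μ X k * φ k := by
        rw [integral_finsetSum _ fun k _ => hind k]
        refine sum_congr rfl fun k _ => ?_
        rw [integral_indicator_const _ (hX (measurableSet_singleton k)), smul_eq_mul, pmfOf,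
          measureReal_def]
    _ ≤ ∑ k ∈ F, maxProb μ X * φ k :=
        sum_le_sum fun k hk => mul_le_mul_of_nonneg_right (pmfOf_le_maxProb k) (hφF k hk)
    _ = maxProb μ X * ∑ k ∈ F, φ k := (mul_sum _ _ _).symm

end MaxProb

lemma sum_range_sub_sq (n : ℕ) (x : ℝ) :
    ∑ j ∈ range n, ((j : ℝ) - x) ^ 2
      = n * x ^ 2 - n * (n - 1) * x + n * (n - 1) * (2 * n - 1) / 6 := by
  induction n with
  | zero => simp
  | succ n ih =>
    rw [sum_range_succ, ih]
    push_cast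
    ring

section Window

variable {a k : ℤ} {n : ℕ} {c v : ℝ}

lemma sum_Ico_sub_sq (hc : c = a + (n - 1) / 2 + v) :
    ∑ k ∈ Ico a (a + n), ((k : ℝ) - c) ^ 2 = n * (v ^ 2 + (n ^ 2 - 1) / 12) := by
  rw [Int.Ico_eq_finset_map, sum_map, add_sub_cancel_left, Int.toNat_natCast]
  simp only [Function.Embedding.trans_apply, Nat.castEmbedding_apply, addLeftEmbedding_apply,
    Int.cast_add, Int.cast_natCast]
  have hshift (j : ℕ) : (a : ℝ) + j - c = j - ((n - 1) / 2 + v) := by rw [hc]; ring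
  simp only [hshift, sum_range_sub_sq]
  ring

lemma sub_sq_le_of_mem_Ico (hv : |v| ≤ 1 / 2) (hc : c = a + (n - 1) / 2 + v)
    (hk : k ∈ Ico a (a + n)) : ((k : ℝ) - c) ^ 2 ≤ ((n + 1) / 2 - |v|) ^ 2 := by
  rw [mem_Ico] at hk
  have h₁ : (a : ℝ) ≤ k := by exact_mod_cast hk.1
  have h₂ : (k : ℝ) ≤ a + n - 1 := by
    have : k ≤ a + n - 1 := by omega
    exact_mod_cast this
  exact sq_le_sq' (by linarith [le_abs_self v]) (by linarith [neg_abs_le v])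

lemma sq_le_sub_sq_of_notMem_Ico (hv : |v| ≤ 1 / 2) (hc : c = a + (n - 1) / 2 + v)
    (hk : k ∉ Ico a (a + n)) : ((n + 1) / 2 - |v|) ^ 2 ≤ ((k : ℝ) - c) ^ 2 := by
  have hr : 0 ≤ (n + 1) / 2 - |v| := by linarith [n.cast_nonneg (α := ℝ)]
  rw [mem_Ico, not_and_or, not_le, not_lt] at hk
  rcases hk with hk | hk
  · have : (k : ℝ) ≤ a - 1 := by
      have : k ≤ a - 1 := by omega
      exact_mod_cast this
    calc ((n + 1) / 2 - |v|) ^ 2 ≤ (c - k) ^ 2 :=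
          pow_le_pow_left₀ hr (by linarith [neg_abs_le v]) 2
      _ = ((k : ℝ) - c) ^ 2 := by ring
  · have : (a : ℝ) + n ≤ k := by exact_mod_cast hk
    exact pow_le_pow_left₀ hr (by linarith [le_abs_self v]) 2

end Window

lemma one_le_sq_mul_one_add_twelve_mul {M V w : ℝ} {n : ℕ} (hM : M ≤ 1) (hn : n * M ≤ 1)
    (hn' : 1 ≤ (n + 1) * M)
    (hV : ((n + 1) / 2 - w) ^ 2 * (1 - n * M) + n * M * (w ^ 2 + (n ^ 2 - 1) / 12) ≤ V) :
    1 ≤ M ^ 2 * (1 + 12 * V) := by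
  generalize hu : 1 - n * M = u at hV
  have hu₀ : 0 ≤ u := by linarith
  have huM : u ≤ M := by linarith
  have hsos : M ^ 2 * (1 + 12 * (((n + 1) / 2 - w) ^ 2 * u + n * M * (w ^ 2 + (n ^ 2 - 1) / 12)))
      - 1 = 3 * (2 * M * w - u * (1 - u + M)) ^ 2
        + u * (M - u) * ((1 - u) * (6 - 2 * u) + u ^ 2 + M * (4 - 3 * u)) := by
    rw [← hu]; ring
  have : 0 ≤ u * (M - u) * ((1 - u) * (6 - 2 * u) + u ^ 2 + M * (4 - 3 * u)) := by
    have : 0 ≤ M := huM.trans' hu₀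
    have : 0 ≤ (1 - u) * (6 - 2 * u) := mul_nonneg (by linarith) (by linarith)
    have : 0 ≤ M * (4 - 3 * u) := mul_nonneg (by linarith) (by linarith)
    have : 0 ≤ u * (M - u) := mul_nonneg hu₀ (by linarith)
    positivity
  linarith [mul_le_mul_of_nonneg_left hV (sq_nonneg M), sq_nonneg (2 * M * w - u * (1 - u + M))]

theorem one_le_maxProb_sq_mul_one_add_twelve_mul_variance {Ω : Type*} [MeasurableSpace Ω]
    {μ : Measure Ω} [IsProbabilityMeasure μ] {X : Ω → ℤ} (hX : Measurable X)
    (hvar : MemLp (fun ω => (X ω : ℝ)) 2 μ) :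
    1 ≤ maxProb μ X ^ 2 * (1 + 12 * variance (fun ω => (X ω : ℝ)) μ) := by
  set M := maxProb μ X
  set c := μ[fun ω => (X ω : ℝ)]
  have hM : 0 < M := maxProb_pos
  set n := ⌊M⁻¹⌋₊
  have hn : n * M ≤ 1 := by
    simpa [hM.ne'] using mul_le_mul_of_nonneg_right (Nat.floor_le (inv_nonneg.2 hM.le)) hM.le
  have hn' : 1 ≤ (n + 1) * M := by
    simpa [hM.ne'] using mul_le_mul_of_nonneg_right (Nat.lt_floor_add_one M⁻¹).le hM.le
  set a := round (c - (n - 1) / 2)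
  set v := c - (n - 1) / 2 - a
  have hv : |v| ≤ 1 / 2 := abs_sub_round _
  have hc : c = a + (n - 1) / 2 + v := by ring
  set r := (n + 1) / 2 - |v|
  have hbathtub : r ^ 2 - variance (fun ω => (X ω : ℝ)) μ
      ≤ M * ∑ k ∈ Ico a (a + n), (r ^ 2 - ((k : ℝ) - c) ^ 2) := by
    have hsq : Integrable (fun ω => ((X ω : ℝ) - c) ^ 2) μ :=
      (hvar.sub (memLp_const c)).integrable_sq
    have hvar_eq : r ^ 2 - variance (fun ω => (X ω : ℝ)) μ
        = ∫ ω, (r ^ 2 - ((X ω : ℝ) - c) ^ 2) ∂μ := by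
      rw [integral_sub (integrable_const _) hsq, integral_const,
        variance_eq_integral hvar.aemeasurable]
      simp [c]
    rw [hvar_eq]
    exact integral_comp_le_maxProb_mul_sum hX
      (fun k hk => sub_nonneg.2 (sub_sq_le_of_mem_Ico hv hc hk))
      (fun k hk => sub_nonpos.2 (sq_le_sub_sq_of_notMem_Ico hv hc hk))
      ((integrable_const _).sub hsq)
  rw [sum_sub_distrib, sum_const, Int.card_Ico, add_sub_cancel_left, Int.toNat_natCast,
    nsmul_eq_mul, sum_Ico_sub_sq hc] at hbathtub
  refine one_le_sq_mul_one_add_twelve_mul maxProb_le_one hn hn' (w := |v|) ?_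
  change r ^ 2 * (1 - n * M) + n * M * (|v| ^ 2 + (n ^ 2 - 1) / 12) ≤ _
  rw [sq_abs]
  linarith

/-- Theorem 1.1 (lower bound) / Corollary 3.2: for any integer-valued random
variable `X` with finite variance, `M(X) ≥ 1/√(1 + 12·Var(X))`; equivalently,
`1 ≤ N_∞(X) = M(X)⁻² ≤ 1 + 12·Var(X)`. -/
theorem maxProb_lower_bound_of_variance
    {Ω : Type*} [MeasurableSpace Ω] (μ : Measure Ω) [IsProbabilityMeasure μ]
    (X : Ω → ℤ) (hX : Measurable X)
    (hvar : MemLp (fun ω => (X ω : ℝ)) 2 μ) :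
    maxProb μ X ≤ 1 ∧
      1 / Real.sqrt (1 + 12 * variance (fun ω => (X ω : ℝ)) μ) ≤ maxProb μ X := by
  have hM : 0 < maxProb μ X := maxProb_pos
  have key := one_le_maxProb_sq_mul_one_add_twelve_mul_variance hX hvar
  have hpos : 0 < 1 + 12 * variance (fun ω => (X ω : ℝ)) μ := by
    linarith [variance_nonneg (fun ω => (X ω : ℝ)) μ]
  refine ⟨maxProb_le_one, ?_⟩
  rw [div_le_iff₀ (sqrt_pos.2 hpos), ← sqrt_sq hM.le, ← sqrt_mul (sq_nonneg _)]
  exact one_le_sqrt.2 key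
end

section
/- Let X be an integer-valued random variable with a discrete log-concave distribution that is symmetric about some point, with finite variance. Then M(X) ≤ 1/√(1 + 2·Var(X)); equivalently, M(X)^2·(1 + 2·Var(X)) ≤ 1. Equality holds for every two-sided geometric distribution f(k) = c_p·p^{|k|}, k ∈ ℤ, with 0 ≤ p < 1 and c_p = (1-p)/(1+p). (Theorem 1.1, symmetric case / Proposition 7.3, particular case.) -/
open MeasureTheory ProbabilityTheory Real

/-!
After translating, the peak `M = f 0` of the probability function `f` sits at `0` and its
centre of symmetry at `s / 2` with `s ∈ {0, 1}`. Compare `f` with the geometric profile `g`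
that has the same peak, is flat on `{0, s}` and decays with the ratio `p` making its total
mass one. Multiplying by `p⁻¹ ^ k` preserves log-concavity, hence unimodality, so once `f`
drops below `g` on one side of the centre it stays below: `f - g` changes sign only once on
each side. Since both have mass one, `f` has the smaller second moment about `s / 2`, and for
`g` the bound `M² (1 + 2 Var) ≤ 1` is an explicit computation, with equality when `s = 0`.
Finally `Var X ≤ 𝔼 (X - c / 2)²`.
-/

namespace IsDiscreteLogConcavePMF

variable {f : ℤ → ℝ}

lemma nonneg (hf : IsDiscreteLogConcavePMF f) (k : ℤ) : 0 ≤ f k := hf.1 k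

lemma comp_add_left (hf : IsDiscreteLogConcavePMF f) (a : ℤ) :
    IsDiscreteLogConcavePMF (fun k => f (a + k)) := by
  obtain ⟨h0, h1, h2⟩ := hf
  refine ⟨fun k => h0 _, fun k l m hkl hlm => h1 _ _ _ (by omega) (by omega), fun k => ?_⟩
  simpa only [add_sub_assoc, add_assoc] using h2 (a + k)

lemma mul_zpow (hf : IsDiscreteLogConcavePMF f) {r : ℝ} (hr : 0 < r) :
    IsDiscreteLogConcavePMF (fun k => f k * r ^ k) := by
  obtain ⟨h0, h1, h2⟩ := hf
  have hpow := zpow_pos hr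
  refine ⟨fun k => mul_nonneg (h0 k) (hpow k).le, fun k l m hkl hlm hk hm => ?_, fun k => ?_⟩
  · exact mul_pos (h1 k l m hkl hlm (pos_of_mul_pos_left hk (hpow k).le)
      (pos_of_mul_pos_left hm (hpow m).le)) (hpow l)
  · have hr2 : r ^ (k - 1) * r ^ (k + 1) = (r ^ k) ^ 2 := by
      rw [← zpow_add₀ hr.ne', ← zpow_natCast, ← zpow_mul]; ring_nf
    calc f (k - 1) * r ^ (k - 1) * (f (k + 1) * r ^ (k + 1))
        = f (k - 1) * f (k + 1) * (r ^ k) ^ 2 := by rw [← hr2]; ring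
      _ ≤ f k ^ 2 * (r ^ k) ^ 2 := by gcongr; exact h2 k
      _ = (f k * r ^ k) ^ 2 := by ring

lemma mul_succ_le_succ_mul (hf : IsDiscreteLogConcavePMF f) {i j : ℤ} (hij : i ≤ j) :
    f i * f (j + 1) ≤ f (i + 1) * f j := by
  obtain ⟨h0, h1, h2⟩ := hf
  induction j, hij using Int.leInduction with
  | base => rw [mul_comm]
  | succ j hij ih =>
    by_cases hpos : 0 < f i ∧ 0 < f (j + 1 + 1)
    · have hj : 0 < f j := h1 _ _ _ hij (by omega) hpos.1 hpos.2
      have hlc : f j * f (j + 1 + 1) ≤ f (j + 1) ^ 2 := by simpa using h2 (j + 1)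
      refine le_of_mul_le_mul_left ?_ hj
      nlinarith [mul_le_mul_of_nonneg_left hlc (h0 i), mul_le_mul_of_nonneg_right ih (h0 (j + 1))]
    · have : f i * f (j + 1 + 1) = 0 := by
        rcases not_and_or.1 hpos with h | h
        · rw [le_antisymm (not_lt.1 h) (h0 i), zero_mul]
        · rw [le_antisymm (not_lt.1 h) (h0 _), mul_zero]
      rw [this]
      exact mul_nonneg (h0 _) (h0 _)

lemma succ_le_of_succ_lt (hf : IsDiscreteLogConcavePMF f) {i j : ℤ} (hij : i ≤ j)
    (hi : f (i + 1) < f i) : f (j + 1) ≤ f j := by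
  refine le_of_mul_le_mul_left ?_ ((hf.nonneg _).trans_lt hi)
  calc f i * f (j + 1) ≤ f (i + 1) * f j := hf.mul_succ_le_succ_mul hij
    _ ≤ f i * f j := mul_le_mul_of_nonneg_right hi.le (hf.nonneg j)

lemma min_le (hf : IsDiscreteLogConcavePMF f) {k l m : ℤ} (hkl : k ≤ l) (hlm : l ≤ m) :
    min (f k) (f m) ≤ f l := by
  by_cases hdesc : ∃ i, k ≤ i ∧ i < l ∧ f (i + 1) < f i
  · obtain ⟨i, -, hil, hi⟩ := hdesc
    have : AntitoneOn f (Set.Icc l m) := antitoneOn_of_add_one_le Set.ordConnected_Icc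
      fun a _ ha _ => hf.succ_le_of_succ_lt (by linarith [ha.1]) hi
    exact min_le_of_right_le (this ⟨le_rfl, hlm⟩ ⟨hlm, le_rfl⟩ hlm)
  · push Not at hdesc
    have : MonotoneOn f (Set.Icc k l) := monotoneOn_of_le_add_one Set.ordConnected_Icc
      fun a _ ha ha1 => hdesc a ha.1 (by linarith [ha1.2])
    exact min_le_of_left_le (this ⟨le_rfl, hkl⟩ ⟨hkl, le_rfl⟩ hkl)

-- `k ↦ f (a + k) * p⁻¹ ^ k` is again log-concave, hence unimodal.
lemma lt_mul_pow_of_lt_mul_pow (hf : IsDiscreteLogConcavePMF f) {p : ℝ} (hp : 0 ≤ p) (a : ℤ)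
    {m n : ℕ} (hmn : m ≤ n) (hm : f (a + m) < f a * p ^ m) : f (a + n) < f a * p ^ n := by
  rcases hp.eq_or_lt with rfl | hp
  · rcases m.eq_zero_or_pos with rfl | hm0
    · simp at hm
    · rw [zero_pow hm0.ne', mul_zero] at hm
      exact absurd hm (not_lt.2 (hf.nonneg _))
  · set φ : ℤ → ℝ := fun k => f (a + k) * p⁻¹ ^ k
    have hφ := (hf.comp_add_left a).mul_zpow (inv_pos.2 hp)
    have key (j : ℕ) : f (a + j) < f a * p ^ j ↔ φ j < φ 0 := by
      simp only [φ, zpow_natCast, inv_pow, zpow_zero, add_zero, mul_one]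
      rw [mul_inv_lt_iff₀ (pow_pos hp j)]
    rw [key] at hm ⊢
    have := hφ.min_le (Int.natCast_nonneg m) (Int.ofNat_le.2 hmn)
    exact (min_le_iff.1 this).resolve_left (not_le.2 hm) |>.trans_lt hm

end IsDiscreteLogConcavePMF

lemma hasSum_add_sq_mul_geometric {𝕜 : Type*} [NormedField 𝕜] {r : 𝕜} (hr : ‖r‖ < 1)
    (h : 𝕜) :
    HasSum (fun n : ℕ => ((n : 𝕜) + h) ^ 2 * r ^ n)
      (2 / (1 - r) ^ 3 + (2 * h - 3) / (1 - r) ^ 2 + (1 - h) ^ 2 / (1 - r)) := by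
  have H (k : ℕ) := hasSum_choose_mul_geometric_of_norm_lt_one (𝕜 := 𝕜) k hr
  have hc (n : ℕ) : ((n + 2).choose 2 * 2 : 𝕜) = (n + 2) * (n + 1) := by
    have := Nat.add_one_mul_choose_eq (n + 1) 1
    rw [Nat.choose_one_right] at this
    simpa using congrArg (Nat.cast : ℕ → 𝕜)
      (show (n + 2).choose 2 * 2 = (n + 2) * (n + 1) from this.symm)
  -- `(n + h)² = 2 C(n + 2, 2) + (2h - 3) C(n + 1, 1) + (1 - h)² C(n, 0)`
  have := ((H 2).mul_left 2).add (((H 1).mul_left (2 * h - 3)).add ((H 0).mul_left ((1 - h) ^ 2)))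
  rw [show 2 / (1 - r) ^ 3 + (2 * h - 3) / (1 - r) ^ 2 + (1 - h) ^ 2 / (1 - r) =
      2 * (1 / (1 - r) ^ (2 + 1)) + ((2 * h - 3) * (1 / (1 - r) ^ (1 + 1))
        + (1 - h) ^ 2 * (1 / (1 - r) ^ (0 + 1))) by ring]
  refine this.congr_fun fun n => ?_
  simp only [Nat.choose_zero_right, Nat.choose_one_right, Nat.cast_add, Nat.cast_one, add_zero]
  linear_combination (-(r ^ n)) * hc n

lemma HasSum.int_of_symm {h : ℤ → ℝ} {s : ℤ} (hs : s = 0 ∨ s = 1)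
    (hsym : ∀ k, h (s - k) = h k) {a : ℝ} (ha : HasSum (fun n : ℕ => h (s + n)) a) :
    HasSum h (2 * a - (1 - s) * h s) := by
  rcases hs with rfl | rfl
  · simp only [Int.zero_add, Int.zero_sub] at ha hsym
    have hneg : HasSum (fun n : ℕ => h (-(n + 1))) (a - h 0) := by
      have := (hasSum_nat_add_iff' 1).2 ha
      simp only [Nat.cast_add, Nat.cast_one, Finset.sum_range_one, Nat.cast_zero] at this
      exact this.congr_fun fun n => hsym _
    convert ha.of_nat_of_neg_add_one hneg using 1
    push_cast; ring
  · have hnat : HasSum (fun n : ℕ => h n) (a + h 0) := by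
      have := (hasSum_nat_add_iff (f := fun n : ℕ => h n) 1).1 (by simpa [add_comm] using ha)
      simpa using this
    have hneg : HasSum (fun n : ℕ => h (-n)) a :=
      ha.congr_fun fun n => by rw [← hsym, sub_neg_eq_add]
    have := hnat.of_nat_of_neg hneg
    rwa [show a + h 0 + a - h 0 = 2 * a - (1 - ((1 : ℤ) : ℝ)) * h 1 by push_cast; ring] at this

/-- For `s ∈ {0, 1}`: symmetric about `s / 2`, equal to `p ^ n` at `s + n` and at `-n`. -/
def geomProfile (s : ℤ) (p : ℝ) (k : ℤ) : ℝ := p ^ (max (k - s) (-k)).toNat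

section GeomProfile

variable {s : ℤ} {p : ℝ}

lemma geomProfile_sub (k : ℤ) : geomProfile s p (s - k) = geomProfile s p k := by
  unfold geomProfile; congr 2; omega

lemma geomProfile_add_nat (hs : 0 ≤ s) (n : ℕ) : geomProfile s p (s + n) = p ^ n := by
  unfold geomProfile; congr; omega

lemma geomProfile_zero (p : ℝ) (k : ℤ) : geomProfile 0 p k = p ^ k.natAbs := by
  unfold geomProfile; congr 1; omega

lemma hasSum_geomProfile (hs : s = 0 ∨ s = 1) (hp : |p| < 1) :
    HasSum (geomProfile s p) (2 / (1 - p) - (1 - s)) := by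
  have h := HasSum.int_of_symm hs geomProfile_sub
    ((hasSum_geometric_of_abs_lt_one hp).congr_fun (geomProfile_add_nat (by omega)))
  rcases hs with rfl | rfl <;> simpa [geomProfile, div_eq_mul_inv] using h

lemma hasSum_sq_mul_geomProfile (hs : s = 0 ∨ s = 1) (hp : |p| < 1) :
    HasSum (fun k : ℤ => ((k : ℝ) - s / 2) ^ 2 * geomProfile s p k)
      (2 * (2 / (1 - p) ^ 3 + (s - 3) / (1 - p) ^ 2 + (1 - s / 2) ^ 2 / (1 - p))) := by
  have hnat := hasSum_add_sq_mul_geometric (by rwa [Real.norm_eq_abs]) ((s : ℝ) / 2)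
  have h := HasSum.int_of_symm (h := fun k : ℤ => ((k : ℝ) - s / 2) ^ 2 * geomProfile s p k) hs
    (fun k => by simp only [geomProfile_sub]; push_cast; ring)
    (hnat.congr_fun fun n => by
      simp only [geomProfile_add_nat (show 0 ≤ s by omega)]; push_cast; ring)
  convert h using 1
  rcases hs with rfl | rfl <;> simp [geomProfile]

lemma sq_mul_one_add_two_mul_moment_geomProfile_le_one {M : ℝ} (hs : s = 0 ∨ s = 1)
    (hp0 : 0 ≤ p) (hp1 : p < 1) (hM : M * (1 + s + (1 - s) * p) = 1 - p) :
    M ^ 2 * (1 + 2 * (M * (2 * (2 / (1 - p) ^ 3 + (s - 3) / (1 - p) ^ 2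
      + (1 - s / 2) ^ 2 / (1 - p))))) ≤ 1 := by
  have hp : 1 - p ≠ 0 := by linarith
  rcases hs with rfl | rfl
  · obtain rfl : M = (1 - p) / (1 + p) := by push_cast at hM; field_simp; linarith
    refine le_of_eq ?_
    push_cast
    field_simp
    ring
  · obtain rfl : M = (1 - p) / 2 := by push_cast at hM; linarith
    field_simp
    push_cast
    nlinarith

end GeomProfile

lemma Monotone.exists_sub_mul_nonpos {w a : ℕ → ℝ} (hw : Monotone w)
    (ha : ∀ m n, m ≤ n → a m < 0 → a n < 0) (hneg : ∃ n, a n < 0) :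
    ∃ t, ∀ n, (w n - t) * a n ≤ 0 := by
  classical
  refine ⟨w (Nat.find hneg), fun n => ?_⟩
  rcases lt_or_ge n (Nat.find hneg) with hn | hn
  · exact mul_nonpos_of_nonpos_of_nonneg (sub_nonpos.2 (hw hn.le))
      (not_lt.1 (Nat.find_min hneg hn))
  · exact mul_nonpos_of_nonneg_of_nonpos (sub_nonneg.2 (hw hn))
      (ha _ _ hn (Nat.find_spec hneg)).le

lemma le_of_hasSum_of_sub_mul_nonpos {ι : Type*} {f g w : ι → ℝ} {a V W t : ℝ}
    (hf : HasSum f a) (hg : HasSum g a) (hV : HasSum (fun i => w i * f i) V)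
    (hW : HasSum (fun i => w i * g i) W) (h : ∀ i, (w i - t) * (f i - g i) ≤ 0) : V ≤ W := by
  have := hasSum_le (fun i => by linarith [h i]) (hV.sub hW) ((hf.sub hg).mul_left t)
  linarith

lemma Int.forall_of_forall_add_nat {s : ℤ} (hs : s = 0 ∨ s = 1) {P : ℤ → Prop}
    (hP : ∀ k, P (s - k) → P k) (h : ∀ n : ℕ, P (s + n)) (k : ℤ) : P k := by
  rcases le_or_gt s k with hk | hk
  · have := h (k - s).toNat
    rwa [show s + ((k - s).toNat : ℤ) = k by omega] at this
  · have := h (-k).toNat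
    rw [show s + ((-k).toNat : ℤ) = s - k by omega] at this
    exact hP k this

namespace IsDiscreteLogConcavePMF

variable {f g : ℤ → ℝ} {s : ℤ} {p : ℝ}

lemma le_apply_zero_of_symm (hf : IsDiscreteLogConcavePMF f) (hs : s = 0 ∨ s = 1)
    (hsym : ∀ k, f (s - k) = f k) (k : ℤ) : f k ≤ f 0 := by
  rcases le_or_gt k 0 with hk | hk
  · simpa [hsym] using hf.min_le hk (show 0 ≤ s - k by omega)
  · simpa [hsym] using hf.min_le (show s - k ≤ 0 by omega) hk.le

lemma exists_sq_sub_mul_nonpos (hf : IsDiscreteLogConcavePMF f) (hs : s = 0 ∨ s = 1)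
    (hfsym : ∀ k, f (s - k) = f k) (hgsym : ∀ k, g (s - k) = g k) (hp : 0 ≤ p)
    (hg : ∀ n : ℕ, g (s + n) = f s * p ^ n) (hf1 : HasSum f 1) (hg1 : HasSum g 1) :
    ∃ t, ∀ k : ℤ, (((k : ℝ) - s / 2) ^ 2 - t) * (f k - g k) ≤ 0 := by
  have hs0 : (0 : ℝ) ≤ s := by exact_mod_cast (show 0 ≤ s by omega)
  by_cases hcross : ∃ n : ℕ, f (s + n) - g (s + n) < 0
  · obtain ⟨t, ht⟩ := Monotone.exists_sub_mul_nonpos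
      (w := fun n : ℕ => ((n : ℝ) + s / 2) ^ 2) (fun m n hmn => by dsimp only; gcongr)
      (fun m n hmn hm => by
        rw [sub_neg, hg] at hm ⊢
        exact hf.lt_mul_pow_of_lt_mul_pow hp s hmn hm) hcross
    refine ⟨t, Int.forall_of_forall_add_nat hs (fun k hk => ?_) fun n => ?_⟩
    · have hw : ((s - k : ℤ) : ℝ) - s / 2 = -((k : ℝ) - s / 2) := by push_cast; ring
      rwa [hfsym, hgsym, hw, neg_sq] at hk
    · simpa [show (s : ℝ) + n - s / 2 = n + s / 2 by ring] using ht n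
  · push Not at hcross
    have hge : ∀ k, g k ≤ f k := Int.forall_of_forall_add_nat hs
      (fun k hk => by rwa [hfsym, hgsym] at hk) fun n => sub_nonneg.1 (hcross n)
    have heq (k : ℤ) : f k = g k :=
      le_antisymm (not_lt.1 fun hlt => (hasSum_lt hge hlt hg1 hf1).false) (hge k)
    exact ⟨0, fun k => by simp [heq k]⟩

theorem sq_mul_one_add_two_mul_le_one (hf : IsDiscreteLogConcavePMF f) (hs : s = 0 ∨ s = 1)
    (hsym : ∀ k, f (s - k) = f k) (hf1 : HasSum f 1) {V : ℝ}
    (hV : HasSum (fun k : ℤ => ((k : ℝ) - s / 2) ^ 2 * f k) V) :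
    f 0 ^ 2 * (1 + 2 * V) ≤ 1 := by
  set M := f 0
  have hmax := hf.le_apply_zero_of_symm hs hsym
  have hfs : f s = M := by simpa using hsym 0
  have hM : 0 < M := by
    refine (hf.nonneg 0).lt_of_ne fun h0 => ?_
    have : f = 0 := funext fun k => le_antisymm ((hmax k).trans h0.symm.le) (hf.nonneg k)
    exact one_ne_zero (hf1.unique (this ▸ hasSum_zero))
  have hmass : (1 + s) * M ≤ 1 := by
    rcases hs with rfl | rfl
    · simpa using le_hasSum hf1 0 fun j _ => hf.nonneg j
    · have h10 : f 1 = M := by simpa using hsym 0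
      have := sum_le_hasSum {0, 1} (fun j _ => hf.nonneg j) hf1
      rw [Finset.sum_pair zero_ne_one, h10] at this
      push_cast; linarith
  have hs1 : (s : ℝ) ≤ 1 := by exact_mod_cast (show s ≤ 1 by omega)
  have hden : 0 < 1 + (1 - s) * M := by nlinarith
  -- the ratio for which `M • geomProfile s p` has mass one
  set p := (1 - (1 + s) * M) / (1 + (1 - s) * M)
  have hp0 : 0 ≤ p := div_nonneg (by linarith) hden.le
  have hp1 : p < 1 := (div_lt_one hden).2 (by nlinarith)
  have hp : |p| < 1 := abs_lt.2 ⟨by linarith, hp1⟩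
  have hMp : M * (1 + s + (1 - s) * p) = 1 - p := by
    linear_combination div_mul_cancel₀ (1 - (1 + s) * M) hden.ne'
  have hg1 : HasSum (fun k => M * geomProfile s p k) 1 := by
    have : 1 - p ≠ 0 := by linarith
    have hmass1 : M * (2 / (1 - p) - (1 - s)) = 1 := by
      field_simp
      linear_combination hMp
    simpa only [hmass1] using (hasSum_geomProfile hs hp).mul_left M
  obtain ⟨t, ht⟩ := hf.exists_sq_sub_mul_nonpos hs hsym (fun k => by rw [geomProfile_sub]) hp0
    (fun n => by rw [geomProfile_add_nat (by omega), hfs]) hf1 hg1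
  have hVW := le_of_hasSum_of_sub_mul_nonpos hf1 hg1 hV
    (((hasSum_sq_mul_geomProfile hs hp).mul_left M).congr_fun fun k => by ring) ht
  calc M ^ 2 * (1 + 2 * V) ≤ M ^ 2 * (1 + 2 * (M * (2 * (2 / (1 - p) ^ 3
        + (s - 3) / (1 - p) ^ 2 + (1 - s / 2) ^ 2 / (1 - p))))) := by gcongr
    _ ≤ 1 := sq_mul_one_add_two_mul_moment_geomProfile_le_one hs hp0 hp1 hMp

theorem sq_iSup_mul_le_one (hf : IsDiscreteLogConcavePMF f) {c : ℤ}
    (hsym : ∀ k, f k = f (c - k)) (hf1 : HasSum f 1) {V : ℝ}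
    (hV : HasSum (fun k : ℤ => ((k : ℝ) - c / 2) ^ 2 * f k) V) :
    (⨆ k, f k) ^ 2 * (1 + 2 * V) ≤ 1 := by
  set a := c / 2
  set s := c % 2
  have hc : c = 2 * a + s := by omega
  have hs : s = 0 ∨ s = 1 := by omega
  have hF := hf.comp_add_left a
  have hFsym (k : ℤ) : f (a + (s - k)) = f (a + k) := by rw [hsym]; congr 1; omega
  have hmax : ⨆ k, f k = f (a + 0) := by
    refine ciSup_eq_of_forall_le_of_forall_lt_exists_gt (fun k => ?_) fun w hw => ⟨_, hw⟩
    simpa using hF.le_apply_zero_of_symm hs hFsym (k - a)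
  rw [hmax]
  refine hF.sq_mul_one_add_two_mul_le_one hs hFsym ((Equiv.addLeft a).hasSum_iff.2 hf1) ?_
  refine ((Equiv.addLeft a).hasSum_iff.2 hV).congr_fun fun k => ?_
  simp only [Function.comp_apply, Equiv.coe_addLeft, hc]
  push_cast; ring

end IsDiscreteLogConcavePMF

lemma twoSidedGeometric_attains_bound {p : ℝ} (hp0 : 0 ≤ p) (hp1 : p < 1) :
    (⨆ k : ℤ, ((1 - p) / (1 + p)) * p ^ k.natAbs) ^ 2 *
      (1 + 2 * ∑' k : ℤ, (k : ℝ) ^ 2 * (((1 - p) / (1 + p)) * p ^ k.natAbs)) = 1 := by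
  set c := (1 - p) / (1 + p)
  have hc : 0 ≤ c := div_nonneg (by linarith) (by linarith)
  have hmax : ⨆ k : ℤ, c * p ^ k.natAbs = c := by
    refine ciSup_eq_of_forall_le_of_forall_lt_exists_gt (fun k => ?_) fun w hw => ⟨0, by simpa⟩
    exact mul_le_of_le_one_right hc (pow_le_one₀ hp0 hp1.le)
  have hV := (hasSum_sq_mul_geomProfile (Or.inl rfl) (abs_lt.2 ⟨by linarith, hp1⟩)).mul_left c
  simp only [geomProfile_zero, Int.cast_zero, zero_div, sub_zero] at hV
  rw [hmax, (hV.congr_fun fun k => by ring).tsum_eq]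
  have : 1 - p ≠ 0 := by linarith
  have : 1 + p ≠ 0 := by linarith
  simp only [c]
  field_simp
  ring

section PMF

variable {Ω : Type*} [MeasurableSpace Ω] {μ : Measure Ω} {X : Ω → ℤ}

lemma hasSum_mul_pmfOf (hX : Measurable X) {φ : ℤ → ℝ}
    (hφ : Integrable (fun ω => φ (X ω)) μ) :
    HasSum (fun k => φ k * pmfOf μ X k) (∫ ω, φ (X ω) ∂μ) := by
  have hφm : AEStronglyMeasurable φ (μ.map X) :=
    (measurable_from_top (f := φ)).aestronglyMeasurable
  have hφν : Integrable φ (μ.map X) := (integrable_map_measure hφm hX.aemeasurable).2 hφ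
  rw [← Measure.sum_smul_dirac (μ.map X)] at hφν
  have := hasSum_integral_measure hφν
  rw [Measure.sum_smul_dirac, integral_map hX.aemeasurable hφm] at this
  refine this.congr_fun fun k => ?_
  rw [integral_smul_measure, integral_dirac, pmfOf,
    Measure.map_apply hX (measurableSet_singleton k), smul_eq_mul, mul_comm]

lemma hasSum_pmfOf [IsProbabilityMeasure μ] (hX : Measurable X) : HasSum (pmfOf μ X) 1 := by
  simpa using hasSum_mul_pmfOf (μ := μ) hX (φ := fun _ => 1) (integrable_const 1)

end PMF

/-- Theorem 1.1 (symmetric case) / Proposition 7.3 (particular case): for a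
symmetric discrete log-concave random variable `X` with finite variance,
`M(X)^2·(1 + 2·Var(X)) ≤ 1`, with equality for every two-sided geometric
distribution `f(k) = ((1-p)/(1+p))·p^{|k|}`, `0 ≤ p < 1`. -/
theorem maxProb_upper_bound_of_symmetric_logConcave
    {Ω : Type*} [MeasurableSpace Ω] (μ : Measure Ω) [IsProbabilityMeasure μ]
    (X : Ω → ℤ) (hX : Measurable X)
    (hlc : IsDiscreteLogConcavePMF (pmfOf μ X))
    (hsym : ∃ c : ℤ, ∀ k : ℤ, pmfOf μ X k = pmfOf μ X (c - k))
    (hvar : MemLp (fun ω => (X ω : ℝ)) 2 μ) :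
    (maxProb μ X ≤ 1 / Real.sqrt (1 + 2 * variance (fun ω => (X ω : ℝ)) μ) ∧
      maxProb μ X ^ 2 * (1 + 2 * variance (fun ω => (X ω : ℝ)) μ) ≤ 1) ∧
    -- equality for every two-sided geometric distribution (mean 0, variance 2p/(1-p)²)
    (∀ p : ℝ, 0 ≤ p → p < 1 →
      (⨆ k : ℤ, ((1 - p) / (1 + p)) * p ^ k.natAbs) ^ 2 *
        (1 + 2 * ∑' k : ℤ, (k : ℝ) ^ 2 * (((1 - p) / (1 + p)) * p ^ k.natAbs)) = 1) := by
  refine ⟨?_, fun p => twoSidedGeometric_attains_bound⟩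
  obtain ⟨c, hc⟩ := hsym
  have hXc : MemLp (fun ω => (X ω : ℝ) - c / 2) 2 μ := hvar.sub (memLp_const _)
  have hVar : variance (fun ω => (X ω : ℝ)) μ ≤ ∫ ω, ((X ω : ℝ) - c / 2) ^ 2 ∂μ := by
    rw [← variance_sub_const hvar.aestronglyMeasurable (c / 2 : ℝ)]
    exact variance_le_expectation_sq hXc.aestronglyMeasurable
  have hbound : maxProb μ X ^ 2 * (1 + 2 * variance (fun ω => (X ω : ℝ)) μ) ≤ 1 :=
    (mul_le_mul_of_nonneg_left (by linarith) (sq_nonneg _)).trans <|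
      hlc.sq_iSup_mul_le_one hc (hasSum_pmfOf hX)
        (hasSum_mul_pmfOf hX (φ := fun k : ℤ => ((k : ℝ) - c / 2) ^ 2) hXc.integrable_sq)
  have hD : 0 < 1 + 2 * variance (fun ω => (X ω : ℝ)) μ := by
    linarith [variance_nonneg (fun ω => (X ω : ℝ)) μ]
  have hM : 0 ≤ maxProb μ X := Real.iSup_nonneg hlc.nonneg
  refine ⟨?_, hbound⟩
  rw [le_div_iff₀ (Real.sqrt_pos.2 hD), ← Real.sqrt_sq hM, ← Real.sqrt_mul (sq_nonneg _)]
  exact (Real.sqrt_le_sqrt hbound).trans_eq Real.sqrt_one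
end

section
/- Let (a_k)_{k=0}^n and (b_k)_{k=0}^m be finite sequences of strictly positive real numbers, each log-concave (i.e., a_k^2 ≥ a_{k-1}·a_{k+1} for 1 ≤ k ≤ n-1, and b_k^2 ≥ b_{k-1}·b_{k+1} for 1 ≤ k ≤ m-1). Then their convolution c_k = ∑_{i+j=k, 0≤i≤n, 0≤j≤m} a_i·b_j, 0 ≤ k ≤ n+m, is a log-concave sequence: c_k^2 ≥ c_{k-1}·c_{k+1} for 1 ≤ k ≤ n+m-1. (Proposition 4.2, Hoggar's theorem.) -/
open Finset

/-- Extension of a sequence `ℕ → ℝ` to `ℤ → ℝ` by zero on negatives. -/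
private noncomputable def extSeq (a : ℕ → ℝ) : ℤ → ℝ :=
  fun x => if 0 ≤ x then a x.toNat else 0

private lemma extSeq_nonneg {n : ℕ} {a : ℕ → ℝ} (ha_pos : ∀ i ≤ n, 0 < a i)
    (ha_zero : ∀ i, n < i → a i = 0) (x : ℤ) : 0 ≤ extSeq a x := by
  unfold extSeq
  split
  · rcases le_or_gt x.toNat n with h | h
    · exact (ha_pos _ h).le
    · exact (ha_zero _ h).ge
  · exact le_refl 0

private lemma ratio_lemma {n : ℕ} {a : ℕ → ℝ} (ha_pos : ∀ i ≤ n, 0 < a i)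
    (ha_lc : ∀ k, 1 ≤ k → k + 1 ≤ n → a (k - 1) * a (k + 1) ≤ a k ^ 2) :
    ∀ p q : ℕ, 1 ≤ p → p ≤ q → q + 1 ≤ n → a (p - 1) * a (q + 1) ≤ a p * a q := by
  intro p q hp hpq
  induction q, hpq using Nat.le_induction with
  | base =>
    intro h
    nlinarith [ha_lc p hp h]
  | succ q hq IH =>
    intro h
    have h1 := IH (by omega)
    have h2 := ha_lc (q + 1) (by omega) (by omega)
    simp only [Nat.add_sub_cancel] at h2
    have hq1 : 0 < a (q + 1) := ha_pos _ (by omega)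
    have hq2 : 0 ≤ a (q + 1 + 1) := (ha_pos _ (by omega)).le
    have hpp : 0 < a p := ha_pos _ (by omega)
    have h0 : 0 ≤ a (p - 1) := (ha_pos _ (by omega)).le
    nlinarith [mul_le_mul_of_nonneg_right h1 hq2,
      mul_le_mul_of_nonneg_left h2 hpp.le]

private lemma extSeq_lc {n : ℕ} {a : ℕ → ℝ} (ha_pos : ∀ i ≤ n, 0 < a i)
    (ha_zero : ∀ i, n < i → a i = 0)
    (ha_lc : ∀ k, 1 ≤ k → k + 1 ≤ n → a (k - 1) * a (k + 1) ≤ a k ^ 2) :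
    ∀ p q : ℤ, p ≤ q →
      extSeq a (p - 1) * extSeq a (q + 1) ≤ extSeq a p * extSeq a q := by
  intro p q hpq
  have hnn := extSeq_nonneg ha_pos ha_zero (a := a)
  rcases le_or_gt p 0 with hp | hp
  · have h0 : extSeq a (p - 1) = 0 := if_neg (by omega)
    rw [h0, zero_mul]
    exact mul_nonneg (hnn p) (hnn q)
  · rcases le_or_gt (q + 1) (n : ℤ) with hq | hq
    · obtain ⟨P, rfl⟩ : ∃ P : ℕ, p = (P : ℤ) := ⟨p.toNat, by omega⟩
      obtain ⟨Q, rfl⟩ : ∃ Q : ℕ, q = (Q : ℤ) := ⟨q.toNat, by omega⟩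
      have h1 : (1 : ℕ) ≤ P := by exact_mod_cast hp
      have h2 : P ≤ Q := by exact_mod_cast hpq
      have h3 : Q + 1 ≤ n := by exact_mod_cast hq
      have e1 : (P : ℤ) - 1 = ((P - 1 : ℕ) : ℤ) := by omega
      have e2 : (Q : ℤ) + 1 = ((Q + 1 : ℕ) : ℤ) := by omega
      rw [e1, e2]
      simp only [extSeq, Int.toNat_natCast, if_pos (Int.natCast_nonneg _)]
      exact ratio_lemma ha_pos ha_lc P Q h1 h2 h3
    · have h0 : extSeq a (q + 1) = 0 := by
        unfold extSeq
        rw [if_pos (by omega)]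
        exact ha_zero _ (by omega)
      rw [h0, mul_zero]
      exact mul_nonneg (hnn p) (hnn q)

private lemma extSeq_mono_aux {n : ℕ} {a : ℕ → ℝ} (ha_pos : ∀ i ≤ n, 0 < a i)
    (ha_zero : ∀ i, n < i → a i = 0)
    (ha_lc : ∀ k, 1 ≤ k → k + 1 ≤ n → a (k - 1) * a (k + 1) ≤ a k ^ 2) :
    ∀ (d : ℕ) (p q r s : ℤ), p ≤ r → r ≤ s → s ≤ q → p + q = r + s → r - p = d →
      extSeq a p * extSeq a q ≤ extSeq a r * extSeq a s := by
  intro d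
  induction d with
  | zero =>
    intro p q r s h1 h2 h3 h4 h5
    have hp : p = r := by omega
    have hq : q = s := by omega
    rw [hp, hq]
  | succ d IH =>
    intro p q r s h1 h2 h3 h4 h5
    have step := extSeq_lc ha_pos ha_zero ha_lc (p + 1) (q - 1) (by omega)
    rw [show p + 1 - 1 = p by ring, show q - 1 + 1 = q by ring] at step
    calc extSeq a p * extSeq a q ≤ extSeq a (p + 1) * extSeq a (q - 1) := step
      _ ≤ extSeq a r * extSeq a s :=
          IH (p + 1) (q - 1) r s (by omega) h2 (by omega) (by omega) (by omega)

/-- Closer index pairs (same sum) have larger product. -/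
private lemma extSeq_pair {n : ℕ} {a : ℕ → ℝ} (ha_pos : ∀ i ≤ n, 0 < a i)
    (ha_zero : ∀ i, n < i → a i = 0)
    (ha_lc : ∀ k, 1 ≤ k → k + 1 ≤ n → a (k - 1) * a (k + 1) ≤ a k ^ 2)
    (p q r s : ℤ) (h1 : p ≤ r) (h2 : r ≤ s) (h3 : s ≤ q) (h4 : p + q = r + s) :
    extSeq a p * extSeq a q ≤ extSeq a r * extSeq a s :=
  extSeq_mono_aux ha_pos ha_zero ha_lc (r - p).toNat p q r s h1 h2 h3 h4 (by omega)

private lemma castSum (F : ℤ → ℝ) (N : ℕ) :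
    ∑ l ∈ Finset.Icc (0 : ℤ) (N : ℤ), F l = ∑ i ∈ Finset.range (N + 1), F i := by
  induction N with
  | zero => simp
  | succ N IH =>
    rw [Finset.sum_range_succ, ← IH,
      show ((N + 1 : ℕ) : ℤ) = (N : ℤ) + 1 by push_cast; ring,
      show Finset.Icc (0 : ℤ) ((N : ℤ) + 1) = insert ((N : ℤ) + 1) (Finset.Icc 0 (N : ℤ)) by
        ext x; simp only [Finset.mem_Icc, Finset.mem_insert]; omega,
      Finset.sum_insert (by simp)]
    ring

private lemma conv1 (a b : ℕ → ℝ) (t N : ℕ) (ht : t ≤ N) :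
    ∑ l ∈ Finset.Icc (0 : ℤ) (N : ℤ), extSeq a l * extSeq b ((t : ℤ) - l)
      = ∑ i ∈ Finset.range (t + 1), a i * b (t - i) := by
  rw [castSum]
  rw [← Finset.sum_subset (Finset.range_subset_range.2 (by omega) :
      Finset.range (t + 1) ⊆ Finset.range (N + 1))]
  · refine Finset.sum_congr rfl fun i hi => ?_
    simp only [Finset.mem_range] at hi
    have h2 : (t : ℤ) - (i : ℤ) = ((t - i : ℕ) : ℤ) := by omega
    rw [h2]
    simp [extSeq]
  · intro i hi hni
    simp only [Finset.mem_range] at hi hni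
    have h0 : extSeq b ((t : ℤ) - (i : ℤ)) = 0 := if_neg (by omega)
    rw [h0, mul_zero]

private lemma conv2 (a b : ℕ → ℝ) (t N : ℕ) (ht : t ≤ N) :
    ∑ l ∈ Finset.Icc (0 : ℤ) (N : ℤ), extSeq a (l - 1) * extSeq b ((t : ℤ) - l)
      = ∑ i ∈ Finset.range t, a i * b (t - 1 - i) := by
  rw [castSum]
  rw [← Finset.sum_subset (Finset.range_subset_range.2 (by omega) :
      Finset.range (t + 1) ⊆ Finset.range (N + 1))]
  · rw [Finset.sum_range_succ']
    have h0 : extSeq a (((0 : ℕ) : ℤ) - 1) = 0 := if_neg (by omega)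
    rw [h0, zero_mul, add_zero]
    refine Finset.sum_congr rfl fun i hi => ?_
    simp only [Finset.mem_range] at hi
    have e1 : ((i + 1 : ℕ) : ℤ) - 1 = ((i : ℕ) : ℤ) := by omega
    have e2 : (t : ℤ) - ((i + 1 : ℕ) : ℤ) = ((t - 1 - i : ℕ) : ℤ) := by omega
    rw [e1, e2]
    simp [extSeq]
  · intro i hi hni
    simp only [Finset.mem_range] at hi hni
    have h0 : extSeq b ((t : ℤ) - (i : ℤ)) = 0 := if_neg (by omega)
    rw [h0, mul_zero]

private lemma cauchy_binet_2x2 (S : Finset ℤ) (f1 f2 g1 g2 : ℤ → ℝ)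
    (h : ∀ l ∈ S, ∀ l' ∈ S,
      0 ≤ f1 l * f2 l' + f2 l * f1 l' - g1 l * g2 l' - g2 l * g1 l') :
    (∑ l ∈ S, g1 l) * (∑ l ∈ S, g2 l) ≤ (∑ l ∈ S, f1 l) * (∑ l ∈ S, f2 l) := by
  have key : 0 ≤ ∑ l ∈ S, ∑ l' ∈ S,
      (f1 l * f2 l' + f2 l * f1 l' - g1 l * g2 l' - g2 l * g1 l') :=
    Finset.sum_nonneg fun l hl => Finset.sum_nonneg fun l' hl' => h l hl l' hl'
  have e : ∑ l ∈ S, ∑ l' ∈ S,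
      (f1 l * f2 l' + f2 l * f1 l' - g1 l * g2 l' - g2 l * g1 l')
      = (∑ l ∈ S, f1 l) * (∑ l ∈ S, f2 l) + (∑ l ∈ S, f2 l) * (∑ l ∈ S, f1 l)
        - (∑ l ∈ S, g1 l) * (∑ l ∈ S, g2 l) - (∑ l ∈ S, g2 l) * (∑ l ∈ S, g1 l) := by
    simp only [Finset.sum_add_distrib, Finset.sum_sub_distrib, ← Finset.mul_sum,
      ← Finset.sum_mul]
  rw [e] at key
  linarith

/-- Proposition 4.2 (Hoggar's theorem): the convolution of two finite strictly
positive log-concave sequences `(a_k)_{k=0}^n` and `(b_k)_{k=0}^m` is a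
log-concave sequence `(c_k)_{k=0}^{n+m}`, `c_k = ∑_{i+j=k} a_i·b_j`. -/
theorem logConcave_convolution (n m : ℕ) (a b : ℕ → ℝ)
    (ha_pos : ∀ i ≤ n, 0 < a i) (ha_zero : ∀ i, n < i → a i = 0)
    (ha_lc : ∀ k, 1 ≤ k → k + 1 ≤ n → a (k - 1) * a (k + 1) ≤ a k ^ 2)
    (hb_pos : ∀ j ≤ m, 0 < b j) (hb_zero : ∀ j, m < j → b j = 0)
    (hb_lc : ∀ k, 1 ≤ k → k + 1 ≤ m → b (k - 1) * b (k + 1) ≤ b k ^ 2) :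
    ∀ k, 1 ≤ k → k + 1 ≤ n + m →
      (∑ i ∈ Finset.range k, a i * b (k - 1 - i)) *
          (∑ i ∈ Finset.range (k + 2), a i * b (k + 1 - i)) ≤
        (∑ i ∈ Finset.range (k + 1), a i * b (k - i)) ^ 2 := by
  intro k hk1 hk2
  set A := extSeq a with hA_def
  set B := extSeq b with hB_def
  have hA := extSeq_pair ha_pos ha_zero ha_lc
  have hB := extSeq_pair hb_pos hb_zero hb_lc
  set S : Finset ℤ := Finset.Icc (0 : ℤ) ((k + 1 : ℕ) : ℤ) with hS_def
  have main := cauchy_binet_2x2 S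
      (fun l => A l * B ((k : ℤ) - l)) (fun l => A (l - 1) * B ((k : ℤ) + 1 - l))
      (fun l => A l * B ((k : ℤ) + 1 - l)) (fun l => A (l - 1) * B ((k : ℤ) - l))
      (by
        intro l _ l' _
        have key : ∀ u v : ℤ, u < v →
            0 ≤ (A u * A (v - 1) - A v * A (u - 1)) *
              (B ((k : ℤ) - u) * B ((k : ℤ) + 1 - v)
                - B ((k : ℤ) - v) * B ((k : ℤ) + 1 - u)) := by
          intro u v huv
          apply mul_nonneg
          · have h := hA (u - 1) v u (v - 1) (by omega) (by omega) (by omega) (by omega)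
            linarith
          · have h := hB ((k : ℤ) - v) ((k : ℤ) + 1 - u) ((k : ℤ) + 1 - v) ((k : ℤ) - u)
              (by omega) (by omega) (by omega) (by omega)
            linarith
        rcases lt_trichotomy l l' with h | h | h
        · have e : A l * B ((k : ℤ) - l) * (A (l' - 1) * B ((k : ℤ) + 1 - l'))
              + A (l - 1) * B ((k : ℤ) + 1 - l) * (A l' * B ((k : ℤ) - l'))
              - A l * B ((k : ℤ) + 1 - l) * (A (l' - 1) * B ((k : ℤ) - l'))
              - A (l - 1) * B ((k : ℤ) - l) * (A l' * B ((k : ℤ) + 1 - l'))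
              = (A l * A (l' - 1) - A l' * A (l - 1)) *
                (B ((k : ℤ) - l) * B ((k : ℤ) + 1 - l')
                  - B ((k : ℤ) - l') * B ((k : ℤ) + 1 - l)) := by ring
          rw [e]
          exact key l l' h
        · subst h
          exact le_of_eq (by ring)
        · have e : A l * B ((k : ℤ) - l) * (A (l' - 1) * B ((k : ℤ) + 1 - l'))
              + A (l - 1) * B ((k : ℤ) + 1 - l) * (A l' * B ((k : ℤ) - l'))
              - A l * B ((k : ℤ) + 1 - l) * (A (l' - 1) * B ((k : ℤ) - l'))
              - A (l - 1) * B ((k : ℤ) - l) * (A l' * B ((k : ℤ) + 1 - l'))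
              = (A l' * A (l - 1) - A l * A (l' - 1)) *
                (B ((k : ℤ) - l') * B ((k : ℤ) + 1 - l)
                  - B ((k : ℤ) - l) * B ((k : ℤ) + 1 - l')) := by ring
          rw [e]
          exact key l' l h)
  have hf1 : ∑ l ∈ S, A l * B ((k : ℤ) - l)
      = ∑ i ∈ Finset.range (k + 1), a i * b (k - i) := by
    have := conv1 a b k (k + 1) (by omega)
    push_cast at this ⊢
    exact this
  have hf2 : ∑ l ∈ S, A (l - 1) * B ((k : ℤ) + 1 - l)
      = ∑ i ∈ Finset.range (k + 1), a i * b (k - i) := by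
    have := conv2 a b (k + 1) (k + 1) (by omega)
    simp only [Nat.add_sub_cancel] at this
    push_cast at this ⊢
    exact this
  have hg1 : ∑ l ∈ S, A l * B ((k : ℤ) + 1 - l)
      = ∑ i ∈ Finset.range (k + 2), a i * b (k + 1 - i) := by
    have := conv1 a b (k + 1) (k + 1) (by omega)
    push_cast at this ⊢
    exact this
  have hg2 : ∑ l ∈ S, A (l - 1) * B ((k : ℤ) - l)
      = ∑ i ∈ Finset.range k, a i * b (k - 1 - i) := by
    have := conv2 a b k (k + 1) (by omega)
    push_cast at this ⊢
    exact this
  calc (∑ i ∈ Finset.range k, a i * b (k - 1 - i)) *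
        (∑ i ∈ Finset.range (k + 2), a i * b (k + 1 - i))
      = (∑ l ∈ S, A l * B ((k : ℤ) + 1 - l)) * (∑ l ∈ S, A (l - 1) * B ((k : ℤ) - l)) := by
        rw [hg1, hg2]; exact mul_comm _ _
    _ ≤ (∑ l ∈ S, A l * B ((k : ℤ) - l)) * (∑ l ∈ S, A (l - 1) * B ((k : ℤ) + 1 - l)) := main
    _ = (∑ i ∈ Finset.range (k + 1), a i * b (k - i)) ^ 2 := by
        rw [hf1, hf2]; exact (pow_two _).symm
end

section
/- If X and Y are independent integer-valued random variables, each with a discrete log-concave distribution, then X + Y has a discrete log-concave distribution. (Corollary 4.3: the class of discrete log-concave probability distributions on ℤ is closed under convolution.) -/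
open MeasureTheory ProbabilityTheory Real

lemma extLC_nat {f : ℤ → ℝ} (hf : IsDiscreteLogConcavePMF f) :
    ∀ n : ℕ, ∀ a b : ℤ, b = a + n → f (a - 1) * f (b + 1) ≤ f a * f b := by
  obtain ⟨hpos, hint, hlc⟩ := hf
  intro n
  induction n with
  | zero =>
    intro a b hb
    have : b = a := by omega
    rw [this]
    simpa [sq] using hlc a
  | succ n ih =>
    intro a b hb
    have hab : b = (a + n) + 1 := by push_cast at hb ⊢; omega
    set c : ℤ := a + n with hc
    rcases (hpos (c + 1)).lt_or_eq with h1 | h1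
    · rcases (hpos c).lt_or_eq with h0 | h0
      · have IH : f (a - 1) * f (c + 1) ≤ f a * f c := ih a c rfl
        have L : f c * f (c + 1 + 1) ≤ f (c + 1) ^ 2 := by
          have := hlc (c + 1)
          simpa using this
        rw [hab]
        nlinarith [hpos (a - 1), hpos (c + 1 + 1), hpos a,
          mul_nonneg (hpos (a - 1)) (hpos (c + 1 + 1))]
      · have ha1 : f (a - 1) = 0 := by
          by_contra h
          have hpa : 0 < f (a - 1) := lt_of_le_of_ne (hpos _) (Ne.symm h)
          have : 0 < f c := hint (a - 1) c (c + 1) (by omega) (by omega) hpa h1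
          linarith
        rw [ha1, zero_mul]
        exact mul_nonneg (hpos a) (hpos b)
    · have hfb : f b = 0 := by rw [hab]; exact h1.symm
      have hlhs : f (a - 1) * f (b + 1) = 0 := by
        rcases (hpos (a - 1)).lt_or_eq with hpa | hpa
        · rcases (hpos (b + 1)).lt_or_eq with hpb | hpb
          · exfalso
            have : 0 < f b := hint (a - 1) b (b + 1) (by omega) (by omega) hpa hpb
            linarith
          · rw [← hpb, mul_zero]
        · rw [← hpa, zero_mul]
      rw [hlhs]
      exact mul_nonneg (hpos a) (hpos b)

lemma extLC {f : ℤ → ℝ} (hf : IsDiscreteLogConcavePMF f) {a b : ℤ} (hab : a ≤ b) :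
    f (a - 1) * f (b + 1) ≤ f a * f b :=
  extLC_nat hf (b - a).toNat a b (by omega)

lemma conv_summable {f g : ℤ → ℝ} (hf0 : ∀ k, 0 ≤ f k) (hg0 : ∀ k, 0 ≤ g k)
    (hfs : Summable f) (hgs : Summable g) (k : ℤ) :
    Summable (fun j => f j * g (k - j)) := by
  apply Summable.of_nonneg_of_le (fun j => mul_nonneg (hf0 j) (hg0 _))
    (fun j => ?_) (hfs.mul_right (∑' m, g m))
  exact mul_le_mul_of_nonneg_left (Summable.le_tsum hgs (k - j) fun m _ => hg0 m) (hf0 j)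

lemma conv_lc {f g : ℤ → ℝ} (hf : IsDiscreteLogConcavePMF f) (hg : IsDiscreteLogConcavePMF g)
    (hfs : Summable f) (hgs : Summable g) :
    IsDiscreteLogConcavePMF (fun k => ∑' j, f j * g (k - j)) := by
  obtain ⟨hf0, hfint, hflc⟩ := id hf
  obtain ⟨hg0, hgint, hglc⟩ := id hg
  have hconv : ∀ k : ℤ, Summable (fun j => f j * g (k - j)) :=
    conv_summable hf0 hg0 hfs hgs
  have hterm0 : ∀ k j : ℤ, 0 ≤ f j * g (k - j) := fun k j => mul_nonneg (hf0 j) (hg0 _)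
  refine ⟨fun k => tsum_nonneg (hterm0 k), ?_, ?_⟩
  · -- interval support
    intro k l m hkl hlm hk hm
    simp only at hk hm ⊢
    have hex : ∀ r : ℤ, 0 < ∑' j, f j * g (r - j) → ∃ j, 0 < f j ∧ 0 < g (r - j) := by
      intro r hr
      by_contra hc
      push_neg at hc
      have hz : ∀ j : ℤ, f j * g (r - j) = 0 := by
        intro j
        rcases (hf0 j).lt_or_eq with h | h
        · rcases (hg0 (r - j)).lt_or_eq with h' | h'
          · exact absurd h' (by simpa using (hc j h).not_gt)
          · rw [← h', mul_zero]
        · rw [← h, zero_mul]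
      rw [tsum_congr hz, tsum_zero] at hr
      exact lt_irrefl 0 hr
    obtain ⟨j1, hj1f, hj1g⟩ := hex k hk
    obtain ⟨j2, hj2f, hj2g⟩ := hex m hm
    have hexl : ∃ j, 0 < f j ∧ 0 < g (l - j) := by
      rcases le_or_gt l (j2 + (k - j1)) with hcase | hcase
      · refine ⟨l - (k - j1), ?_, ?_⟩
        · exact hfint j1 _ j2 (by omega) (by omega) hj1f hj2f
        · have harg : l - (l - (k - j1)) = k - j1 := by ring
          rw [harg]; exact hj1g
      · exact ⟨j2, hj2f, hgint (k - j1) (l - j2) (m - j2) (by omega) (by omega) hj1g hj2g⟩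
    obtain ⟨j, hjf, hjg⟩ := hexl
    exact Summable.tsum_pos (hconv l) (hterm0 l) j (mul_pos hjf hjg)
  · -- log-concavity
    intro k
    simp only
    -- shifted summabilities
    have hshift : ∀ m : ℤ, Summable (fun s : ℤ => f (s - 1) * g (m + 1 - s)) := by
      intro m
      have h1 : (fun s : ℤ => f (s - 1) * g (m + 1 - s)) =
          (fun t : ℤ => f t * g (m - t)) ∘ (fun s : ℤ => s - 1) := by
        funext s
        simp only [Function.comp_apply]
        congr 2
        ring
      rw [h1]
      exact ((Equiv.subRight (1 : ℤ)).summable_iff).mpr (hconv m)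
    have hs1 : Summable (fun s : ℤ => f s * g (k - s)) := hconv k
    have hs2 : Summable (fun t : ℤ => f (t - 1) * g (k + 1 - t)) := hshift k
    have hs3 : Summable (fun t : ℤ => f t * g (k + 1 - t)) := hconv (k + 1)
    have hs4 : Summable (fun s : ℤ => f (s - 1) * g (k - s)) := by
      have := hshift (k - 1)
      simpa using this
    -- the two double sums
    have hA : Summable (fun p : ℤ × ℤ =>
        (f p.1 * g (k - p.1)) * (f (p.2 - 1) * g (k + 1 - p.2))) :=
      Summable.mul_of_nonneg (f := fun s : ℤ => f s * g (k - s))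
        (g := fun t : ℤ => f (t - 1) * g (k + 1 - t))
        hs1 hs2 (Pi.le_def.mpr fun s => hterm0 k s)
        (Pi.le_def.mpr fun t => mul_nonneg (hf0 _) (hg0 _))
    have hB : Summable (fun p : ℤ × ℤ =>
        (f (p.1 - 1) * g (k - p.1)) * (f p.2 * g (k + 1 - p.2))) :=
      Summable.mul_of_nonneg (f := fun s : ℤ => f (s - 1) * g (k - s))
        (g := fun t : ℤ => f t * g (k + 1 - t)) hs4 hs3
        (Pi.le_def.mpr fun s => mul_nonneg (hf0 _) (hg0 _)) (Pi.le_def.mpr fun t => hterm0 (k + 1) t)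
    set A : ℤ × ℤ → ℝ := fun p => (f p.1 * g (k - p.1)) * (f (p.2 - 1) * g (k + 1 - p.2))
      with hAdef
    set B : ℤ × ℤ → ℝ := fun p => (f (p.1 - 1) * g (k - p.1)) * (f p.2 * g (k + 1 - p.2))
      with hBdef
    -- product formulas
    have hprod1 : (∑' s, f s * g (k - s)) * (∑' t, f (t - 1) * g (k + 1 - t)) = ∑' p, A p :=
      tsum_mul_tsum_of_summable_norm (f := fun s : ℤ => f s * g (k - s))
        (g := fun t : ℤ => f (t - 1) * g (k + 1 - t))
        (summable_norm_iff.mpr hs1) (summable_norm_iff.mpr hs2)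
    have hprod2 : (∑' s, f (s - 1) * g (k - s)) * (∑' t, f t * g (k + 1 - t)) = ∑' p, B p :=
      tsum_mul_tsum_of_summable_norm (f := fun s : ℤ => f (s - 1) * g (k - s))
        (g := fun t : ℤ => f t * g (k + 1 - t))
        (summable_norm_iff.mpr hs4) (summable_norm_iff.mpr hs3)
    -- reindexings
    have hre2 : (∑' t : ℤ, f (t - 1) * g (k + 1 - t)) = ∑' s : ℤ, f s * g (k - s) := by
      rw [← (Equiv.addRight (1 : ℤ)).tsum_eq (fun t : ℤ => f (t - 1) * g (k + 1 - t))]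
      apply tsum_congr
      intro s
      simp only [Equiv.coe_addRight]
      congr 2 <;> ring_nf
    have hre4 : (∑' j : ℤ, f j * g (k - 1 - j)) = ∑' s : ℤ, f (s - 1) * g (k - s) := by
      rw [← (Equiv.subRight (1 : ℤ)).tsum_eq (fun j : ℤ => f j * g (k - 1 - j))]
      apply tsum_congr
      intro s
      simp only [Equiv.subRight_apply]
      congr 2 <;> ring_nf
    -- key pointwise inequality
    have key : ∀ p : ℤ × ℤ, 0 ≤ A p - B p + (A p.swap - B p.swap) := by
      have expand : ∀ s t : ℤ, A (s, t) - B (s, t) + (A (t, s) - B (t, s)) =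
          (f s * f (t - 1) - f (s - 1) * f t) *
            (g (k - s) * g (k + 1 - t) - g (k - t) * g (k + 1 - s)) := by
        intro s t
        simp only [hAdef, hBdef]
        ring
      have aux : ∀ s t : ℤ, s ≤ t →
          0 ≤ (f s * f (t - 1) - f (s - 1) * f t) *
            (g (k - s) * g (k + 1 - t) - g (k - t) * g (k + 1 - s)) := by
        intro s t hst
        rcases eq_or_lt_of_le hst with rfl | hlt
        · have h0 : f s * f (s - 1) - f (s - 1) * f s = 0 := by ring
          rw [h0, zero_mul]
        · apply mul_nonneg
          · have := extLC hf (a := s) (b := t - 1) (by omega)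
            have ht : t - 1 + 1 = t := by ring
            rw [ht] at this
            linarith
          · have := extLC hg (a := k + 1 - t) (b := k - s) (by omega)
            have h1 : k + 1 - t - 1 = k - t := by ring
            have h2 : k - s + 1 = k + 1 - s := by ring
            rw [h1, h2] at this
            linarith
      intro p
      obtain ⟨s, t⟩ := p
      simp only [Prod.swap_prod_mk]
      rw [expand s t]
      rcases le_total s t with h | h
      · exact aux s t h
      · have hsym : (f s * f (t - 1) - f (s - 1) * f t) *
            (g (k - s) * g (k + 1 - t) - g (k - t) * g (k + 1 - s)) =
            (f t * f (s - 1) - f (t - 1) * f s) *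
            (g (k - t) * g (k + 1 - s) - g (k - s) * g (k + 1 - t)) := by ring
        rw [hsym]
        exact aux t s h
    -- summability of D and its swap
    have hD : Summable (fun p : ℤ × ℤ => A p - B p) := hA.sub hB
    have hDs : Summable (fun p : ℤ × ℤ => A p.swap - B p.swap) := by
      have : (fun p : ℤ × ℤ => A p.swap - B p.swap) =
          (fun p : ℤ × ℤ => A p - B p) ∘ ⇑(Equiv.prodComm ℤ ℤ) := rfl
      rw [this]
      exact ((Equiv.prodComm ℤ ℤ).summable_iff).mpr hD
    have hswap_eq : (∑' p : ℤ × ℤ, (A p.swap - B p.swap)) = ∑' p : ℤ × ℤ, (A p - B p) := by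
      have := (Equiv.prodComm ℤ ℤ).tsum_eq (fun p : ℤ × ℤ => A p - B p)
      exact this
    have hmain : 0 ≤ ∑' p : ℤ × ℤ, (A p - B p) := by
      have h2 : 0 ≤ ∑' p : ℤ × ℤ, (A p - B p + (A p.swap - B p.swap)) := tsum_nonneg key
      rw [Summable.tsum_add hD hDs, hswap_eq] at h2
      linarith
    rw [Summable.tsum_sub hA hB] at hmain
    -- conclude
    rw [hre4, sq]
    calc (∑' s : ℤ, f (s - 1) * g (k - s)) * (∑' j : ℤ, f j * g (k + 1 - j)) = ∑' p, B p :=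
          hprod2
      _ ≤ ∑' p, A p := by linarith
      _ = (∑' s, f s * g (k - s)) * (∑' t, f (t - 1) * g (k + 1 - t)) := hprod1.symm
      _ = (∑' j : ℤ, f j * g (k - j)) * (∑' j : ℤ, f j * g (k - j)) := by rw [hre2]


lemma pmf_summable {Ω : Type*} [MeasurableSpace Ω] (μ : Measure Ω) [IsProbabilityMeasure μ]
    (X : Ω → ℤ) (hX : Measurable X) : Summable (pmfOf μ X) := by
  apply ENNReal.summable_toReal
  have hdisj : Pairwise (Function.onFun Disjoint fun j : ℤ => X ⁻¹' {j}) := by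
    intro i j hij
    refine Set.disjoint_left.mpr fun ω hi hj => hij ?_
    simp only [Set.mem_preimage, Set.mem_singleton_iff] at hi hj
    rw [← hi, ← hj]
  rw [← measure_iUnion hdisj fun j => hX (measurableSet_singleton j)]
  exact measure_ne_top μ _

lemma pmf_conv {Ω : Type*} [MeasurableSpace Ω] (μ : Measure Ω) [IsProbabilityMeasure μ]
    (X Y : Ω → ℤ) (hX : Measurable X) (hY : Measurable Y) (hindep : IndepFun X Y μ) (k : ℤ) :
    pmfOf μ (fun ω => X ω + Y ω) k = ∑' j : ℤ, pmfOf μ X j * pmfOf μ Y (k - j) := by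
  have hset : (fun ω => X ω + Y ω) ⁻¹' {k} = ⋃ j : ℤ, (X ⁻¹' {j} ∩ Y ⁻¹' {k - j}) := by
    ext ω
    simp only [Set.mem_preimage, Set.mem_singleton_iff, Set.mem_iUnion, Set.mem_inter_iff]
    constructor
    · intro h
      exact ⟨X ω, rfl, by omega⟩
    · rintro ⟨j, hj, hj'⟩
      omega
  have hdisj : Pairwise (Function.onFun Disjoint fun j : ℤ => X ⁻¹' {j} ∩ Y ⁻¹' {k - j}) := by
    intro i j hij
    refine Set.disjoint_left.mpr fun ω hi hj => hij ?_
    simp only [Set.mem_inter_iff, Set.mem_preimage, Set.mem_singleton_iff] at hi hj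
    rw [← hi.1, ← hj.1]
  have hmeas : ∀ j : ℤ, MeasurableSet (X ⁻¹' {j} ∩ Y ⁻¹' {k - j}) := fun j =>
    (hX (measurableSet_singleton j)).inter (hY (measurableSet_singleton (k - j)))
  rw [pmfOf, hset, measure_iUnion hdisj hmeas,
    ENNReal.tsum_toReal_eq fun j => measure_ne_top μ _]
  apply tsum_congr
  intro j
  rw [hindep.measure_inter_preimage_eq_mul {j} {k - j} (measurableSet_singleton j)
    (measurableSet_singleton (k - j)), ENNReal.toReal_mul]
  rfl

/-- Corollary 4.3: the class of discrete log-concave probability distributions on ℤ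
is closed under convolution: if `X` and `Y` are independent integer-valued random
variables with discrete log-concave distributions, then so is `X + Y`. -/
theorem isDiscreteLogConcavePMF_add
    {Ω : Type*} [MeasurableSpace Ω] (μ : Measure Ω) [IsProbabilityMeasure μ]
    (X Y : Ω → ℤ) (hX : Measurable X) (hY : Measurable Y)
    (hindep : IndepFun X Y μ)
    (hXlc : IsDiscreteLogConcavePMF (pmfOf μ X))
    (hYlc : IsDiscreteLogConcavePMF (pmfOf μ Y)) :
    IsDiscreteLogConcavePMF (pmfOf μ (fun ω => X ω + Y ω)) := by
  have heq : pmfOf μ (fun ω => X ω + Y ω) =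
      fun k => ∑' j : ℤ, pmfOf μ X j * pmfOf μ Y (k - j) :=
    funext (pmf_conv μ X Y hX hY hindep)
  rw [heq]
  exact conv_lc hXlc hYlc (pmf_summable μ X hX) (pmf_summable μ Y hY)
end

section
/- Let Z be a real-valued random variable with a log-concave density g, and let m be a mode of Z, i.e., a point where g attains its maximum M(Z) = g(m). Then M(Z)^2 · E(Z - m)^2 ≤ 2. (Proposition 6.1.) -/
/-!
Split the law of `Z` at the mode `m`. On each side the profile `h r = g (m ± r)`, `r > 0`, has
some mass `p` and satisfies `h s ≥ M ^ (1 - s / r) * h r ^ (s / r)` for `0 < s ≤ r`, where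
`M = g m`. Against the exponential profile `M * exp (-(M / p) * r)` of the same mass this forces
a single crossing from above to below, so `h` has the smaller second moment, namely at most
`2 p ^ 3 / M ^ 2`. With `p + q = 1` for the two sides, `M² E (Z - m)² ≤ 2 (p ^ 3 + q ^ 3) ≤ 2`.
-/

open MeasureTheory Real Set
open scoped Nat

def IsLogConcave (g : ℝ → ℝ) : Prop :=
  ∀ x y t : ℝ, 0 ≤ t → t ≤ 1 → g x ^ (1 - t) * g y ^ t ≤ g ((1 - t) * x + t * y)

-- Log-concavity of `h` on each `[0, r]` when `h 0` is taken to be `M`.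
def RayLogConcave (M : ℝ) (h : ℝ → ℝ) : Prop :=
  ∀ ⦃r s : ℝ⦄, 0 < s → s ≤ r → M ^ (1 - s / r) * h r ^ (s / r) ≤ h s

namespace IsLogConcave

variable {g : ℝ → ℝ} {m : ℝ}

theorem apply_le_of_mem_uIcc (hlc : IsLogConcave g) (hg : ∀ x, 0 ≤ g x) (hm : ∀ x, g x ≤ g m)
    {x y : ℝ} (hy : y ∈ uIcc x m) : g x ≤ g y := by
  rw [← segment_eq_uIcc, segment_eq_image] at hy
  obtain ⟨t, ⟨ht0, ht1⟩, rfl⟩ := hy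
  calc g x = g x ^ (1 - t) * g x ^ t := by
        rw [← rpow_add' (hg x) (by simp), sub_add_cancel, rpow_one]
    _ ≤ g x ^ (1 - t) * g m ^ t :=
      mul_le_mul_of_nonneg_left (rpow_le_rpow (hg x) (hm x) ht0) (rpow_nonneg (hg x) _)
    _ ≤ g ((1 - t) • x + t • m) := hlc x m t ht0 ht1

theorem measurable (hlc : IsLogConcave g) (hg : ∀ x, 0 ≤ g x) (hm : ∀ x, g x ≤ g m) :
    Measurable g := by
  have hleft : Monotone fun x => g (min x m) := fun a b hab =>
    hlc.apply_le_of_mem_uIcc hg hm <|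
      mem_uIcc_of_le (min_le_min_right m hab) (min_le_right b m)
  have hright : Antitone fun x => g (max x m) := fun a b hab =>
    hlc.apply_le_of_mem_uIcc hg hm <|
      mem_uIcc_of_ge (le_max_right a m) (max_le_max_right m hab)
  have hsplit : g = (Iic m).piecewise (fun x => g (min x m)) fun x => g (max x m) := by
    ext x
    by_cases hx : x ≤ m
    · simp [hx]
    · simp [hx, (not_le.1 hx).le]
  rw [hsplit]
  exact hleft.measurable.piecewise measurableSet_Iic hright.measurable

theorem rayLogConcave (hlc : IsLogConcave g) (m u : ℝ) :
    RayLogConcave (g m) fun r => g (m + r * u) := by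
  intro r s hs hsr
  have hr : 0 < r := hs.trans_le hsr
  have hpoint : (1 - s / r) * m + s / r * (m + r * u) = m + s * u := by
    field_simp
    ring
  simpa only [hpoint] using
    hlc m (m + r * u) (s / r) (by positivity) (div_le_one_of_le₀ hsr hr.le)

end IsLogConcave

theorem lintegral_Ioi_pow_mul_exp_neg_mul (n : ℕ) {l : ℝ} (hl : 0 < l) :
    ∫⁻ r in Ioi 0, ENNReal.ofReal (r ^ n * exp (-(l * r))) =
      ENNReal.ofReal (n ! / l ^ (n + 1)) := by
  have key := integral_rpow_mul_exp_neg_mul_Ioi (a := n + 1) (by positivity) hl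
  simp only [add_sub_cancel_right, rpow_natCast, Gamma_nat_eq_factorial] at key
  rw [← Nat.cast_succ, rpow_natCast, one_div_pow, one_div_mul_eq_div] at key
  rw [← ofReal_integral_eq_lintegral_ofReal, key]
  · exact Integrable.of_integral_ne_zero (by rw [key]; positivity)
  · filter_upwards [ae_restrict_mem measurableSet_Ioi] with r (hr : 0 < r)
    positivity

theorem setLIntegral_Ioi_mul_le_of_crossing {μ : Measure ℝ} {f ψ w : ℝ → ℝ} {c : ℝ}
    (hf : Measurable f) (hψ : Measurable ψ) (hf0 : ∀ r, 0 ≤ f r) (hψ0 : ∀ r, 0 ≤ ψ r)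
    (hw0 : ∀ r, 0 ≤ w r) (hw : MonotoneOn w (Ici 0)) (hc : 0 ≤ c)
    (hbelow : ∀ r, 0 < r → r < c → ψ r ≤ f r) (habove : ∀ r, c < r → f r ≤ ψ r)
    (hmass : ∫⁻ r in Ioi 0, ENNReal.ofReal (f r) ∂μ = ∫⁻ r in Ioi 0, ENNReal.ofReal (ψ r) ∂μ)
    (hfin : ∫⁻ r in Ioi 0, ENNReal.ofReal (ψ r) ∂μ ≠ ⊤) :
    ∫⁻ r in Ioi 0, ENNReal.ofReal (w r * f r) ∂μ ≤
      ∫⁻ r in Ioi 0, ENNReal.ofReal (w r * ψ r) ∂μ := by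
  have hpoint : ∀ r, 0 < r → w r * f r + w c * ψ r ≤ w r * ψ r + w c * f r := by
    intro r hr
    rcases lt_trichotomy r c with hrc | rfl | hcr
    · nlinarith [hw (mem_Ici.2 hr.le) (mem_Ici.2 hc) hrc.le, hbelow r hr hrc]
    · exact (add_comm _ _).le
    · nlinarith [hw (mem_Ici.2 hc) (mem_Ici.2 hr.le) hcr.le, habove r hcr]
  have key : ∫⁻ r in Ioi 0, ENNReal.ofReal (w r * f r) ∂μ +
        ENNReal.ofReal (w c) * ∫⁻ r in Ioi 0, ENNReal.ofReal (ψ r) ∂μ ≤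
      ∫⁻ r in Ioi 0, ENNReal.ofReal (w r * ψ r) ∂μ +
        ENNReal.ofReal (w c) * ∫⁻ r in Ioi 0, ENNReal.ofReal (f r) ∂μ := by
    rw [← lintegral_const_mul' _ _ ENNReal.ofReal_ne_top,
      ← lintegral_const_mul' _ _ ENNReal.ofReal_ne_top,
      ← lintegral_add_right _ (hψ.ennreal_ofReal.const_mul _),
      ← lintegral_add_right _ (hf.ennreal_ofReal.const_mul _)]
    refine setLIntegral_mono' measurableSet_Ioi fun r hr => ?_
    simp only [← ENNReal.ofReal_mul (hw0 c)]
    rw [← ENNReal.ofReal_add (mul_nonneg (hw0 r) (hf0 r)) (mul_nonneg (hw0 c) (hψ0 r)),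
      ← ENNReal.ofReal_add (mul_nonneg (hw0 r) (hψ0 r)) (mul_nonneg (hw0 c) (hf0 r))]
    exact ENNReal.ofReal_le_ofReal (hpoint r hr)
  rw [hmass] at key
  exact (ENNReal.add_le_add_iff_right (ENNReal.mul_ne_top ENNReal.ofReal_ne_top hfin)).1 key

namespace RayLogConcave

variable {M : ℝ} {h : ℝ → ℝ}

theorem apply_le_exp_of_apply_le (hh : RayLogConcave M h) (hM : 0 < M) (l : ℝ) {r s : ℝ}
    (hs : 0 < s) (hsr : s ≤ r) (hle : h s ≤ M * exp (-(l * s))) :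
    h r ≤ M * exp (-(l * r)) := by
  by_contra! hlt
  have hr : 0 < r := hs.trans_le hsr
  have ht : 0 < s / r := div_pos hs hr
  have hexp : M * exp (-(l * s)) = M ^ (1 - s / r) * (M * exp (-(l * r))) ^ (s / r) := by
    rw [mul_rpow hM.le (exp_pos _).le, ← exp_mul, ← mul_assoc, ← rpow_add hM, sub_add_cancel,
      rpow_one]
    field_simp
  have hstrict :
      M ^ (1 - s / r) * (M * exp (-(l * r))) ^ (s / r) < M ^ (1 - s / r) * h r ^ (s / r) :=
    mul_lt_mul_of_pos_left (rpow_lt_rpow (by positivity) hlt ht) (by positivity)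
  linarith [hh hs hsr]

theorem exists_crossing (hh : RayLogConcave M h) (hM : 0 < M) (hmeas : Measurable h) (l : ℝ)
    (hmass : ∫⁻ r in Ioi 0, ENNReal.ofReal (h r) =
      ∫⁻ r in Ioi 0, ENNReal.ofReal (M * exp (-(l * r))))
    (hfin : ∫⁻ r in Ioi 0, ENNReal.ofReal (M * exp (-(l * r))) ≠ ⊤) :
    ∃ c, 0 ≤ c ∧ (∀ r, 0 < r → r < c → M * exp (-(l * r)) ≤ h r) ∧
      ∀ r, c < r → h r ≤ M * exp (-(l * r)) := by
  set S := {r | 0 < r ∧ h r ≤ M * exp (-(l * r))}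
  have hS : S.Nonempty := by
    by_contra hS
    refine (lintegral_strict_mono (by simp) hmeas.ennreal_ofReal.aemeasurable hfin ?_).ne
      hmass.symm
    filter_upwards [ae_restrict_mem measurableSet_Ioi] with r (hr : 0 < r)
    have hlt : M * exp (-(l * r)) < h r := by
      by_contra! hle
      exact hS ⟨r, hr, hle⟩
    exact (ENNReal.ofReal_lt_ofReal_iff ((by positivity : 0 < M * exp _).trans hlt)).2 hlt
  refine ⟨sInf S, le_csInf hS fun s hs => hs.1.le, fun r hr hrc => ?_, fun r hrc => ?_⟩
  · by_contra! hlt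
    exact (csInf_le (s := S) ⟨0, fun s hs => hs.1.le⟩ ⟨hr, hlt.le⟩).not_gt hrc
  · obtain ⟨s, hs, hsr⟩ := exists_lt_of_csInf_lt hS hrc
    exact hh.apply_le_exp_of_apply_le hM l hs.1 hsr.le hs.2

theorem lintegral_sq_mul_le_of_lintegral_eq (hh : RayLogConcave M h) (hM : 0 < M)
    (hmeas : Measurable h) (h0 : ∀ r, 0 ≤ h r) {p : ℝ} (hp : 0 < p)
    (hmass : ∫⁻ r in Ioi 0, ENNReal.ofReal (h r) = ENNReal.ofReal p) :
    ENNReal.ofReal (M ^ 2) * ∫⁻ r in Ioi 0, ENNReal.ofReal (r ^ 2 * h r) ≤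
      2 * ENNReal.ofReal p ^ 3 := by
  set l := M / p
  have hl : 0 < l := div_pos hM hp
  have hexp_moment (n : ℕ) : ∫⁻ r in Ioi 0, ENNReal.ofReal (r ^ n * (M * exp (-(l * r)))) =
      ENNReal.ofReal M * ENNReal.ofReal (n ! / l ^ (n + 1)) := by
    rw [← lintegral_Ioi_pow_mul_exp_neg_mul n hl,
      ← lintegral_const_mul' _ _ ENNReal.ofReal_ne_top]
    refine lintegral_congr fun r => ?_
    rw [← ENNReal.ofReal_mul hM.le, mul_left_comm]
  have hexp_mass : ∫⁻ r in Ioi 0, ENNReal.ofReal (M * exp (-(l * r))) = ENNReal.ofReal p := by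
    have hzeroth := hexp_moment 0
    simp only [pow_zero, one_mul, Nat.factorial_zero, Nat.cast_one, zero_add, pow_one] at hzeroth
    rw [hzeroth, ← ENNReal.ofReal_mul hM.le]
    congr 1
    simp only [l]
    field_simp
  have hsame_mass := hmass.trans hexp_mass.symm
  have hfin := hexp_mass ▸ ENNReal.ofReal_ne_top
  obtain ⟨c, hc, hbelow, habove⟩ := hh.exists_crossing hM hmeas l hsame_mass hfin
  calc ENNReal.ofReal (M ^ 2) * ∫⁻ r in Ioi 0, ENNReal.ofReal (r ^ 2 * h r)
      ≤ ENNReal.ofReal (M ^ 2) *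
          ∫⁻ r in Ioi 0, ENNReal.ofReal (r ^ 2 * (M * exp (-(l * r)))) := by
        gcongr 1
        exact setLIntegral_Ioi_mul_le_of_crossing hmeas (by fun_prop) h0 (fun r => by positivity)
          sq_nonneg (fun a ha b _ hab => pow_le_pow_left₀ ha hab 2) hc hbelow habove hsame_mass hfin
    _ = 2 * ENNReal.ofReal p ^ 3 := by
        rw [hexp_moment 2, ← ENNReal.ofReal_mul hM.le, ← ENNReal.ofReal_mul (sq_nonneg M),
          ← ENNReal.ofReal_pow hp.le, ← ENNReal.ofReal_ofNat 2, ← ENNReal.ofReal_mul zero_le_two]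
        congr 1
        simp only [l, div_pow]
        field_simp
        norm_num

theorem lintegral_sq_mul_le (hh : RayLogConcave M h) (hM : 0 < M) (hmeas : Measurable h)
    (h0 : ∀ r, 0 ≤ h r) :
    ENNReal.ofReal (M ^ 2) * ∫⁻ r in Ioi 0, ENNReal.ofReal (r ^ 2 * h r) ≤
      2 * (∫⁻ r in Ioi 0, ENNReal.ofReal (h r)) ^ 3 := by
  set P := ∫⁻ r in Ioi 0, ENNReal.ofReal (h r) with hP
  rcases eq_top_or_lt_top P with htop | hfin
  · simp [htop]
  rcases eq_or_ne P 0 with hzero | hne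
  · have hmoment : ∫⁻ r in Ioi 0, ENNReal.ofReal (r ^ 2 * h r) = 0 := by
      refine (lintegral_eq_zero_iff (by fun_prop)).2 ?_
      filter_upwards [(lintegral_eq_zero_iff hmeas.ennreal_ofReal).1 hzero] with r hr
      simp only [Pi.zero_apply, ENNReal.ofReal_eq_zero] at hr ⊢
      exact mul_nonpos_of_nonneg_of_nonpos (sq_nonneg r) hr
    simp [hmoment]
  · rw [← ENNReal.ofReal_toReal hfin.ne] at hP ⊢
    exact hh.lintegral_sq_mul_le_of_lintegral_eq hM hmeas h0
      (ENNReal.toReal_pos hne hfin.ne) hP.symm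

end RayLogConcave

theorem lintegral_eq_setLIntegral_Ioi_sub_add_setLIntegral_Ioi_add (F : ℝ → ENNReal) (m : ℝ) :
    ∫⁻ x, F x = (∫⁻ r in Ioi 0, F (m - r)) + ∫⁻ r in Ioi 0, F (m + r) := by
  have hleft : ∫⁻ r in Ioi 0, F (m - r) = ∫⁻ x in Iio m, F x := by
    simpa using (Measure.measurePreserving_sub_left volume m).setLIntegral_comp_emb
      (Homeomorph.subLeft m).measurableEmbedding F (Ioi 0)
  have hright : ∫⁻ r in Ioi 0, F (m + r) = ∫⁻ x in Ici m, F x := by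
    simpa [setLIntegral_congr Ioi_ae_eq_Ici] using
      (measurePreserving_add_left volume m).setLIntegral_comp_emb
        (Homeomorph.addLeft m).measurableEmbedding F (Ioi 0)
  rw [hleft, hright, ← compl_Iio, lintegral_add_compl F measurableSet_Iio]

theorem lintegral_comp_eq_lintegral_mul_density {Ω α : Type*} [MeasurableSpace Ω]
    [MeasurableSpace α] {μ : Measure Ω} {ν : Measure α} {Z : Ω → α} {ρ F : α → ENNReal}
    (hZ : Measurable Z) (hρ : Measurable ρ) (hdens : μ.map Z = ν.withDensity ρ)
    (hF : Measurable F) : ∫⁻ ω, F (Z ω) ∂μ = ∫⁻ x, ρ x * F x ∂ν := by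
  rw [← lintegral_map hF hZ, hdens, lintegral_withDensity_eq_lintegral_mul _ hρ hF]
  rfl

/-- Proposition 6.1: if a real-valued random variable `Z` has a log-concave density
`g` with mode at `m` (i.e. `g` attains its maximum `M(Z) = g(m)` at `m`), then
`M(Z)^2 · E(Z - m)^2 ≤ 2`. -/
theorem logConcave_density_mode_second_moment
    {Ω : Type*} [MeasurableSpace Ω] (μ : Measure Ω) [IsProbabilityMeasure μ]
    (Z : Ω → ℝ) (hZ : Measurable Z)
    (g : ℝ → ℝ) (hg : ∀ x, 0 ≤ g x)
    (hdens : Measure.map Z μ = volume.withDensity (fun x => ENNReal.ofReal (g x)))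
    (hlc : ∀ x y t : ℝ, 0 ≤ t → t ≤ 1 →
      g x ^ (1 - t) * g y ^ t ≤ g ((1 - t) * x + t * y))
    (m : ℝ) (hm : ∀ x, g x ≤ g m) :
    ENNReal.ofReal (g m ^ 2) * ∫⁻ ω, ENNReal.ofReal ((Z ω - m) ^ 2) ∂μ ≤ 2 := by
  have hmeas : Measurable g := IsLogConcave.measurable hlc hg hm
  have hexpect (F : ℝ → ENNReal) (hF : Measurable F) :
      ∫⁻ ω, F (Z ω) ∂μ = ∫⁻ x, ENNReal.ofReal (g x) * F x :=
    lintegral_comp_eq_lintegral_mul_density hZ hmeas.ennreal_ofReal hdens hF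
  have hmass : ∫⁻ x, ENNReal.ofReal (g x) = 1 := by simpa using (hexpect 1 measurable_const).symm
  have hM : 0 < g m := by
    by_contra! hM
    have hzero (x : ℝ) : ENNReal.ofReal (g x) = 0 := ENNReal.ofReal_eq_zero.2 ((hm x).trans hM)
    simp [hzero] at hmass
  have hside (u : ℝ) := (IsLogConcave.rayLogConcave hlc m u).lintegral_sq_mul_le hM
    (by fun_prop) (fun r => hg _)
  have hleft := hside (-1)
  have hright := hside 1
  simp only [mul_one, mul_neg_one, ← sub_eq_add_neg] at hleft hright
  rw [lintegral_eq_setLIntegral_Ioi_sub_add_setLIntegral_Ioi_add _ m] at hmass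
  rw [hexpect (fun x => ENNReal.ofReal ((x - m) ^ 2)) (by fun_prop),
    lintegral_eq_setLIntegral_Ioi_sub_add_setLIntegral_Ioi_add _ m]
  simp only [sub_sub_cancel_left, neg_sq, add_sub_cancel_left, ← ENNReal.ofReal_mul (hg _),
    mul_comm (g _)]
  set P := ∫⁻ r in Ioi 0, ENNReal.ofReal (g (m - r))
  set Q := ∫⁻ r in Ioi 0, ENNReal.ofReal (g (m + r))
  calc _ = _ + _ := mul_add _ _ _
    _ ≤ 2 * P ^ 3 + 2 * Q ^ 3 := add_le_add hleft hright
    _ ≤ 2 * (P + Q) ^ 3 := by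
      rw [← mul_add]
      gcongr
      exact pow_add_pow_le (by positivity) (by positivity) three_ne_zero
    _ = 2 := by rw [hmass, one_pow, mul_one]
end

section
/- Let X be an integer-valued random variable with a discrete log-concave distribution with probability function f, and let m ∈ ℤ be a mode of X, i.e., a point where f attains its maximum M(X) = f(m). Then M(X)^2 · E(X - m)^2 ≤ 6; in particular, M(X)^2 · Var(X) ≤ 6. (Proposition 6.2.) -/
open MeasureTheory ProbabilityTheory Real

/-!
Log-concavity gives `f k * f (k + a + b) ≤ f (k + a) * f (k + b)` for all `a b : ℕ`, hence
`f m ^ 2 * f (m + a + b + c) ≤ f (m + a) * f (m + b) * f (m + c)`. Summing over the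
`(j + 1) (j + 2) / 2 ≥ j ^ 2 / 2` triples with `a + b + c = j`, and then over `j`, gives
`f m ^ 2 * ∑ j, j ^ 2 * f (m + j) ≤ 2 * (∑ j, f (m + j)) ^ 3 ≤ 2`. With the same bound to the left
of `m`, `f m ^ 2 * E (X - m) ^ 2 ≤ 4`, and the variance is at most the second moment about `m`.
-/

open Finset
open scoped ENNReal

namespace IsDiscreteLogConcavePMF

variable {f : ℤ → ℝ}

theorem mul_add_one_le_of_pos (h0 : ∀ k, 0 ≤ f k) (hlc : ∀ k, f (k - 1) * f (k + 1) ≤ f k ^ 2)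
    (k : ℤ) (n : ℕ) (hpos : ∀ j, k ≤ j → j ≤ k + n → 0 < f j) :
    f k * f (k + n + 1) ≤ f (k + 1) * f (k + n) := by
  induction n with
  | zero => simp [mul_comm]
  | succ n ih =>
    have ih := ih fun j hkj hjn => hpos j hkj (by omega)
    have hlc := hlc (k + n + 1)
    rw [add_sub_cancel_right] at hlc
    have hfn : 0 < f (k + n) := hpos _ (by omega) (by omega)
    push_cast
    rw [← add_assoc]
    refine le_of_mul_le_mul_left ?_ hfn
    nlinarith [h0 k, h0 (k + 1), h0 (k + n + 1)]

theorem mul_add_add_le_of_pos (h0 : ∀ k, 0 ≤ f k) (hlc : ∀ k, f (k - 1) * f (k + 1) ≤ f k ^ 2)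
    (k : ℤ) (a b : ℕ) (hpos : ∀ j, k ≤ j → j ≤ k + a + b → 0 < f j) :
    f k * f (k + a + b) ≤ f (k + a) * f (k + b) := by
  induction a with
  | zero => simp
  | succ a ih =>
    have ih := ih fun j hkj hjn => hpos j hkj (by omega)
    have hstep := mul_add_one_le_of_pos h0 hlc (k + a) b
      fun j hkj hjn => hpos j (by omega) (by omega)
    have hfa : 0 < f (k + a) := hpos _ (by omega) (by omega)
    push_cast
    rw [← add_assoc, add_right_comm _ 1]
    refine le_of_mul_le_mul_left ?_ hfa
    nlinarith [h0 k, h0 (k + a + 1), h0 (k + a + b), h0 (k + a + b + 1)]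

theorem mul_add_add_le (hf : IsDiscreteLogConcavePMF f) (k : ℤ) (a b : ℕ) :
    f k * f (k + a + b) ≤ f (k + a) * f (k + b) := by
  obtain ⟨h0, hint, hlc⟩ := hf
  rcases (h0 k).eq_or_lt with hk | hk
  · rw [← hk, zero_mul]
    exact mul_nonneg (h0 _) (h0 _)
  rcases (h0 (k + a + b)).eq_or_lt with hkab | hkab
  · rw [← hkab, mul_zero]
    exact mul_nonneg (h0 _) (h0 _)
  exact mul_add_add_le_of_pos h0 hlc k a b fun j hkj hjn => hint k j _ hkj hjn hk hkab

end IsDiscreteLogConcavePMF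

theorem ENNReal.tsum_mul_tsum_eq_tsum_sum_antidiagonal (f g : ℕ → ℝ≥0∞) :
    (∑' n, f n) * ∑' n, g n = ∑' n, ∑ kl ∈ antidiagonal n, f kl.1 * g kl.2 := by
  simp_rw [← ENNReal.tsum_mul_right, ← ENNReal.tsum_mul_left]
  rw [← ENNReal.tsum_prod, ← HasAntidiagonal.sigmaAntidiagonalEquivProd.tsum_eq,
    ENNReal.tsum_sigma']
  congr 1 with n
  exact Finset.tsum_subtype (antidiagonal n) (fun kl => f kl.1 * g kl.2)

theorem Nat.sq_le_two_mul_sum_range_succ (j : ℕ) : j ^ 2 ≤ 2 * ∑ i ∈ range (j + 1), (i + 1) := by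
  induction j with
  | zero => simp
  | succ j ih =>
    rw [sum_range_succ]
    nlinarith

theorem ENNReal.sq_mul_tsum_sq_mul_le {p : ℕ → ℝ≥0∞} (hp : ∀ a b, p 0 * p (a + b) ≤ p a * p b) :
    p 0 ^ 2 * ∑' j : ℕ, (j : ℝ≥0∞) ^ 2 * p j ≤ 2 * (∑' j, p j) ^ 3 := by
  have hcube : (∑' j, p j) ^ 3 =
      ∑' j, ∑ ic ∈ antidiagonal j, (∑ ab ∈ antidiagonal ic.1, p ab.1 * p ab.2) * p ic.2 := by
    rw [pow_succ, sq, ENNReal.tsum_mul_tsum_eq_tsum_sum_antidiagonal,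
      ENNReal.tsum_mul_tsum_eq_tsum_sum_antidiagonal]
  have htriple : ∀ a b c, p 0 ^ 2 * p (a + b + c) ≤ p a * p b * p c := fun a b c =>
    calc p 0 ^ 2 * p (a + b + c) = p 0 * (p 0 * p (a + b + c)) := by ring
      _ ≤ p 0 * (p (a + b) * p c) := by gcongr p 0 * ?_; exact hp _ _
      _ = p 0 * p (a + b) * p c := by ring
      _ ≤ p a * p b * p c := by gcongr ?_ * p c; exact hp _ _
  have hterm : ∀ j : ℕ, (j : ℝ≥0∞) ^ 2 * (p 0 ^ 2 * p j) ≤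
      2 * ∑ ic ∈ antidiagonal j, (∑ ab ∈ antidiagonal ic.1, p ab.1 * p ab.2) * p ic.2 := by
    intro j
    have hcount : (j : ℝ≥0∞) ^ 2 ≤ 2 * ∑ ic ∈ antidiagonal j, ((ic.1 + 1 : ℕ) : ℝ≥0∞) := by
      rw [Nat.sum_antidiagonal_eq_sum_range_succ_mk]
      exact_mod_cast Nat.sq_le_two_mul_sum_range_succ j
    calc (j : ℝ≥0∞) ^ 2 * (p 0 ^ 2 * p j)
        ≤ 2 * ∑ ic ∈ antidiagonal j, ((ic.1 + 1 : ℕ) : ℝ≥0∞) * (p 0 ^ 2 * p j) := by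
          rw [← sum_mul, ← mul_assoc 2]; exact mul_le_mul_left hcount _
      _ ≤ _ := by
          gcongr 2 * ?_
          refine sum_le_sum fun ⟨i, c⟩ hic => ?_
          obtain rfl : i + c = j := HasAntidiagonal.mem_antidiagonal.mp hic
          rw [← Nat.card_antidiagonal i, ← nsmul_eq_mul, ← sum_const, sum_mul]
          refine sum_le_sum fun ⟨a, b⟩ hab => ?_
          obtain rfl : a + b = i := HasAntidiagonal.mem_antidiagonal.mp hab
          exact htriple a b c
  calc p 0 ^ 2 * ∑' j : ℕ, (j : ℝ≥0∞) ^ 2 * p j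
        = ∑' j : ℕ, (j : ℝ≥0∞) ^ 2 * (p 0 ^ 2 * p j) := by
        rw [← ENNReal.tsum_mul_left]; congr 1 with j; ring
    _ ≤ _ := by rw [hcube, ← ENNReal.tsum_mul_left]; exact ENNReal.tsum_le_tsum hterm

theorem ENNReal.tsum_int_le_tsum_nat_add_tsum_nat_neg (h : ℤ → ℝ≥0∞) :
    ∑' k, h k ≤ ∑' n : ℕ, h n + ∑' n : ℕ, h (-n) :=
  calc ∑' k, h k ≤ ∑' k, h k + h 0 := le_self_add
    _ = ∑' n : ℕ, (h n + h (-n)) := (tsum_nat_add_neg ENNReal.summable).symm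
    _ = _ := ENNReal.tsum_add

theorem ENNReal.sq_mul_tsum_sq_sub_mul_le_four {ν : ℤ → ℝ≥0∞}
    (hν : ∀ k (a b : ℕ), ν k * ν (k + a + b) ≤ ν (k + a) * ν (k + b)) (hmass : ∑' k, ν k ≤ 1)
    (m : ℤ) : ν m ^ 2 * ∑' k : ℤ, ENNReal.ofReal (((k : ℝ) - m) ^ 2) * ν k ≤ 4 := by
  have hright : ν m ^ 2 * ∑' j : ℕ, (j : ℝ≥0∞) ^ 2 * ν (m + j) ≤ 2 := by
    have hp := ENNReal.sq_mul_tsum_sq_mul_le (p := fun j : ℕ => ν (m + j)) fun a b => by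
      simpa [add_assoc] using hν m a b
    have hmass' : ∑' j : ℕ, ν (m + j) ≤ 1 :=
      (ENNReal.tsum_comp_le_tsum_of_injective
        ((add_right_injective m).comp Nat.cast_injective) ν).trans hmass
    simp only [Nat.cast_zero, add_zero] at hp
    calc _ ≤ 2 * (∑' j : ℕ, ν (m + j)) ^ 3 := hp
      _ ≤ 2 * 1 ^ 3 := by gcongr
      _ = 2 := by norm_num
  have hleft : ν m ^ 2 * ∑' j : ℕ, (j : ℝ≥0∞) ^ 2 * ν (m - j) ≤ 2 := by
    have hp := ENNReal.sq_mul_tsum_sq_mul_le (p := fun j : ℕ => ν (m - j)) fun a b => by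
      have h := hν (m - (a + b : ℕ)) b a
      rw [show m - ((a + b : ℕ) : ℤ) + b + a = m by push_cast; ring,
        show m - ((a + b : ℕ) : ℤ) + b = m - a by push_cast; ring,
        show m - ((a + b : ℕ) : ℤ) + a = m - b by push_cast; ring,
        mul_comm (ν (m - _))] at h
      simpa only [Nat.cast_zero, sub_zero] using h
    have hmass' : ∑' j : ℕ, ν (m - j) ≤ 1 :=
      (ENNReal.tsum_comp_le_tsum_of_injective
        ((sub_right_injective (b := m)).comp Nat.cast_injective) ν).trans hmass
    simp only [Nat.cast_zero, sub_zero] at hp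
    calc _ ≤ 2 * (∑' j : ℕ, ν (m - j)) ^ 3 := hp
      _ ≤ 2 * 1 ^ 3 := by gcongr
      _ = 2 := by norm_num
  have hsplit : ∑' k : ℤ, ENNReal.ofReal (((k : ℝ) - m) ^ 2) * ν k ≤
      ∑' j : ℕ, (j : ℝ≥0∞) ^ 2 * ν (m + j) + ∑' j : ℕ, (j : ℝ≥0∞) ^ 2 * ν (m - j) := by
    rw [← (Equiv.addLeft m).tsum_eq]
    refine (ENNReal.tsum_int_le_tsum_nat_add_tsum_nat_neg _).trans_eq ?_
    congr 1 <;> congr 1 with j <;> simp [← sub_eq_add_neg, ENNReal.ofReal_pow]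
  calc _ ≤ ν m ^ 2 * (∑' j : ℕ, (j : ℝ≥0∞) ^ 2 * ν (m + j)
          + ∑' j : ℕ, (j : ℝ≥0∞) ^ 2 * ν (m - j)) := by gcongr
    _ ≤ 2 + 2 := by rw [mul_add]; gcongr
    _ = 4 := by norm_num

section

variable {Ω : Type*} [MeasurableSpace Ω] {μ : Measure Ω}

theorem evariance_le_lintegral_sq_sub [IsProbabilityMeasure μ] {Y : Ω → ℝ}
    (hY : AEMeasurable Y μ) (c : ℝ) :
    evariance Y μ ≤ ∫⁻ ω, ENNReal.ofReal ((Y ω - c) ^ 2) ∂μ := by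
  by_cases hfin : ∫⁻ ω, ENNReal.ofReal ((Y ω - c) ^ 2) ∂μ = ∞
  · simp [hfin]
  have hsq : Integrable (fun ω => (Y ω - c) ^ 2) μ :=
    ⟨((hY.sub_const c).pow_const 2).aestronglyMeasurable,
      (hasFiniteIntegral_iff_ofReal (.of_forall fun _ => sq_nonneg _)).mpr
        (lt_top_iff_ne_top.mpr hfin)⟩
  have hYc : MemLp (fun ω => Y ω - c) 2 μ :=
    (memLp_two_iff_integrable_sq (hY.sub_const c).aestronglyMeasurable).mpr hsq
  have hY2 : MemLp Y 2 μ := by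
    convert hYc.add (memLp_const c) using 1
    ext ω
    simp
  rw [← hY2.ofReal_variance_eq, ← variance_sub_const hY.aestronglyMeasurable c,
    ← ofReal_integral_eq_lintegral_ofReal hsq (.of_forall fun _ => sq_nonneg _)]
  exact ENNReal.ofReal_le_ofReal
    (variance_le_expectation_sq (hY.sub_const c).aestronglyMeasurable)

theorem lintegral_comp_eq_tsum_mul_measure_preimage {α : Type*} [Countable α] [MeasurableSpace α]
    [MeasurableSingletonClass α] {X : Ω → α} (hX : Measurable X) (g : α → ℝ≥0∞) :
    ∫⁻ ω, g (X ω) ∂μ = ∑' a, g a * μ (X ⁻¹' {a}) := by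
  rw [← lintegral_map (measurable_of_countable g) hX, lintegral_countable']
  simp_rw [Measure.map_apply hX (measurableSet_singleton _)]

theorem ofReal_pmfOf [IsFiniteMeasure μ] (X : Ω → ℤ) (k : ℤ) :
    ENNReal.ofReal (pmfOf μ X k) = μ (X ⁻¹' {k}) :=
  ENNReal.ofReal_toReal (measure_ne_top μ _)

theorem pmfOf_sq_mul_lintegral_sq_sub_le_four [IsProbabilityMeasure μ] {X : Ω → ℤ}
    (hX : Measurable X) (hlc : IsDiscreteLogConcavePMF (pmfOf μ X)) (m : ℤ) :
    ENNReal.ofReal (pmfOf μ X m ^ 2) * ∫⁻ ω, ENNReal.ofReal (((X ω : ℝ) - m) ^ 2) ∂μ ≤ 4 := by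
  have hν : ∀ k (a b : ℕ), μ (X ⁻¹' {k}) * μ (X ⁻¹' {k + a + b}) ≤
      μ (X ⁻¹' {k + a}) * μ (X ⁻¹' {k + b}) := fun k a b => by
    simp_rw [← ofReal_pmfOf, ← ENNReal.ofReal_mul (hlc.1 _)]
    exact ENNReal.ofReal_le_ofReal (hlc.mul_add_add_le k a b)
  have hmass : ∑' k, μ (X ⁻¹' {k}) ≤ 1 := by
    simpa using (lintegral_comp_eq_tsum_mul_measure_preimage (μ := μ) hX 1).symm.le
  rw [ENNReal.ofReal_pow (hlc.1 m), ofReal_pmfOf,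
    lintegral_comp_eq_tsum_mul_measure_preimage hX (fun k => ENNReal.ofReal (((k : ℝ) - m) ^ 2))]
  exact ENNReal.sq_mul_tsum_sq_sub_mul_le_four hν hmass m

end

theorem discrete_logConcave_mode_second_moment_general
    {Ω : Type*} [MeasurableSpace Ω] (μ : Measure Ω) [IsProbabilityMeasure μ]
    (X : Ω → ℤ) (hX : Measurable X)
    (hlc : IsDiscreteLogConcavePMF (pmfOf μ X))
    (m : ℤ) :
    ENNReal.ofReal (pmfOf μ X m ^ 2) *
        ∫⁻ ω, ENNReal.ofReal (((X ω : ℝ) - (m : ℝ)) ^ 2) ∂μ ≤ 6 ∧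
      ENNReal.ofReal (pmfOf μ X m ^ 2) * evariance (fun ω => (X ω : ℝ)) μ ≤ 6 := by
  have hmoment := pmfOf_sq_mul_lintegral_sq_sub_le_four hX hlc m
  have h46 : (4 : ℝ≥0∞) ≤ 6 := by norm_num
  refine ⟨hmoment.trans h46, le_trans ?_ (hmoment.trans h46)⟩
  gcongr
  exact evariance_le_lintegral_sq_sub (by fun_prop) m

/-- Proposition 6.2: if `X` is an integer-valued random variable with a discrete
log-concave distribution whose probability function attains its maximum `M(X)` at
a mode `m ∈ ℤ`, then `M(X)^2·E(X - m)^2 ≤ 6`; in particular `M(X)^2·Var(X) ≤ 6`. -/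
theorem discrete_logConcave_mode_second_moment
    {Ω : Type*} [MeasurableSpace Ω] (μ : Measure Ω) [IsProbabilityMeasure μ]
    (X : Ω → ℤ) (hX : Measurable X)
    (hlc : IsDiscreteLogConcavePMF (pmfOf μ X))
    (m : ℤ) (hm : ∀ k : ℤ, pmfOf μ X k ≤ pmfOf μ X m) :
    ENNReal.ofReal (pmfOf μ X m ^ 2) *
        ∫⁻ ω, ENNReal.ofReal (((X ω : ℝ) - (m : ℝ)) ^ 2) ∂μ ≤ 6 ∧
      ENNReal.ofReal (pmfOf μ X m ^ 2) * evariance (fun ω => (X ω : ℝ)) μ ≤ 6 :=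
  discrete_logConcave_mode_second_moment_general μ X hX hlc m
end

section
/- Let f : ℤ → [0,∞) be a symmetric (f(-k) = f(k) for all k) discrete log-concave probability function. Then there exists a unique p ∈ [0,1) such that g(k) = f(0)·p^{|k|}, k ∈ ℤ, is a probability function (a symmetric two-sided geometric distribution with the same maximum f(0) as f), and f majorizes g: ∑_{k=0}^n f↓(k) ≥ ∑_{k=0}^n g↓(k) for all n ≥ 0. (Lemma 7.1.) -/
open MeasureTheory ProbabilityTheory Real

/-- `g : ℕ → [0,∞)` is a decreasing rearrangement of `f : ℤ → [0,∞)`: it is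
non-increasing and equals `f ∘ τ` for some bijection `τ : ℕ ≃ ℤ`. -/
def IsDecreasingRearrangement (f : ℤ → ℝ) (g : ℕ → ℝ) : Prop :=
  (∀ i : ℕ, g (i + 1) ≤ g i) ∧ ∃ τ : ℕ ≃ ℤ, ∀ i : ℕ, g i = f (τ i)

/-- `f` majorizes `g`: all partial sums of a decreasing rearrangement of `f`
dominate those of a decreasing rearrangement of `g`. -/
def Majorizes (f g : ℤ → ℝ) : Prop :=
  ∀ fd gd : ℕ → ℝ, IsDecreasingRearrangement f fd → IsDecreasingRearrangement g gd →
    ∀ n : ℕ, ∑ k ∈ Finset.range (n + 1), gd k ≤ ∑ k ∈ Finset.range (n + 1), fd k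

/-! ### Auxiliary machinery -/

/-- The zig-zag enumeration of the integers: `0, 1, -1, 2, -2, ...`. -/
def auxNatIntEquiv : ℕ ≃ ℤ where
  toFun n := if n % 2 = 1 then (((n + 1) / 2 : ℕ) : ℤ) else -((n / 2 : ℕ) : ℤ)
  invFun z := if 0 < z then (2 * z - 1).toNat else (-(2 * z)).toNat
  left_inv n := by
    rcases Nat.even_or_odd n with ⟨k, hk⟩ | ⟨k, hk⟩ <;> subst hk <;>
      simp only [] <;> split_ifs <;> omega
  right_inv z := by
    simp only []
    split_ifs <;> omega

lemma auxNatIntEquiv_natAbs (n : ℕ) : (auxNatIntEquiv n).natAbs = (n + 1) / 2 := by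
  simp only [auxNatIntEquiv, Equiv.coe_fn_mk]
  split_ifs <;> omega

/-- Any two decreasing rearrangements of the same function are comparable. -/
lemma aux_rearrange_le (h : ℤ → ℝ) (a b : ℕ → ℝ)
    (ha : ∀ i, a (i + 1) ≤ a i) (hb : ∀ i, b (i + 1) ≤ b i)
    (τ σ : ℕ ≃ ℤ) (hτ : ∀ i, a i = h (τ i)) (hσ : ∀ i, b i = h (σ i)) (n : ℕ) :
    a n ≤ b n := by
  by_contra hcon
  push_neg at hcon
  have haa : Antitone a := antitone_nat_of_succ_le ha
  have hba : Antitone b := antitone_nat_of_succ_le hb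
  have hsub : (Finset.range (n + 1)).image τ ⊆ (Finset.range n).image σ := by
    intro z hz
    obtain ⟨i, hi, rfl⟩ := Finset.mem_image.mp hz
    have hi' : i ≤ n := Nat.lt_succ_iff.mp (Finset.mem_range.mp hi)
    have hz' : b n < h (τ i) := by
      rw [← hτ i]
      exact lt_of_lt_of_le hcon (haa hi')
    set m := σ.symm (τ i) with hm
    have hzm : h (σ m) = h (τ i) := by rw [hm, Equiv.apply_symm_apply]
    have hmn : m < n := by
      by_contra hmn
      push_neg at hmn
      have := hba hmn
      rw [hσ, hzm] at this
      exact absurd (lt_of_lt_of_le hz' this) (lt_irrefl _)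
    exact Finset.mem_image.mpr ⟨m, Finset.mem_range.mpr hmn, by rw [hm, Equiv.apply_symm_apply]⟩
  have h1 : ((Finset.range (n + 1)).image τ).card = n + 1 := by
    rw [Finset.card_image_of_injective _ τ.injective, Finset.card_range]
  have h2 := Finset.card_le_card hsub
  have h3 := Finset.card_image_le (f := σ) (s := Finset.range n)
  rw [h1, Finset.card_range] at *
  omega

/-- Key inequality: partial sums of a log-concave nonincreasing sequence dominate
those of the geometric sequence with the same start and the same total sum. -/
lemma aux_key (F : ℕ → ℝ) (p : ℝ) (hp0 : 0 ≤ p)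
    (hFnn : ∀ j, 0 ≤ F j)
    (hsupp : ∀ j : ℕ, 0 < F (j + 1) → 0 < F j)
    (hFlc : ∀ j : ℕ, F j * F (j + 2) ≤ F (j + 1) ^ 2)
    (hFs : Summable F) (hGs : Summable (fun j : ℕ => F 0 * p ^ j))
    (hsum : ∑' j : ℕ, F 0 * p ^ j = ∑' j : ℕ, F j) (s : ℕ) :
    ∑ j ∈ Finset.range (s + 1), F 0 * p ^ j ≤ ∑ j ∈ Finset.range (s + 1), F j := by
  set P : ℕ → Prop := fun j => F (j + 1) ≤ p * F j with hP
  have hPmono : ∀ j, P j → P (j + 1) := by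
    intro j hj
    rcases eq_or_lt_of_le (hFnn j) with h0 | h0
    · have hj' : F (j + 1) ≤ p * F j := hj
      rw [← h0, mul_zero] at hj'
      have h1 : F (j + 1) = 0 := le_antisymm hj' (hFnn _)
      have h2 : F (j + 2) = 0 := by
        by_contra hc
        have := hsupp (j + 1) (lt_of_le_of_ne (hFnn _) (Ne.symm hc))
        rw [h1] at this; exact lt_irrefl _ this
      simp [P, h1, h2]
    · have h1 : F (j + 1) ^ 2 ≤ (p * F j) * F (j + 1) := by
        nlinarith [hFnn (j + 1), hj]
      have h2 : F (j + 2) * F j ≤ (p * F (j + 1)) * F j := by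
        nlinarith [hFlc j]
      exact le_of_mul_le_mul_right (by linarith) h0
  have hPup : ∀ i j, i ≤ j → P i → P j := by
    intro i j hij hi
    induction j, hij using Nat.le_induction with
    | base => exact hi
    | succ k hk ih => exact hPmono k ih
  have hchain : ∀ j, (∀ i, i < j → ¬ P i) → F 0 * p ^ j ≤ F j := by
    intro j
    induction j with
    | zero => simp
    | succ k ih =>
      intro hnp
      have h1 : F 0 * p ^ k ≤ F k := ih (fun i hi => hnp i (Nat.lt_succ_of_lt hi))
      have h2 : ¬ P k := hnp k (Nat.lt_succ_self k)
      simp only [P] at h2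
      push_neg at h2
      calc F 0 * p ^ (k + 1) = p * (F 0 * p ^ k) := by ring
      _ ≤ p * F k := mul_le_mul_of_nonneg_left h1 hp0
      _ ≤ F (k + 1) := le_of_lt h2
  by_cases hcase : ∀ j, j ≤ s → F 0 * p ^ j ≤ F j
  · exact Finset.sum_le_sum fun j hj => hcase j (Nat.lt_succ_iff.mp (Finset.mem_range.mp hj))
  · push_neg at hcase
    obtain ⟨j, hjs, hjlt⟩ := hcase
    have hPj : ∃ i, i < j ∧ P i := by
      by_contra hc
      push_neg at hc
      exact absurd (hchain j hc) (not_le.mpr hjlt)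
    obtain ⟨i, hij, hPi⟩ := hPj
    have htail : ∀ m, j ≤ m → F m ≤ F 0 * p ^ m := by
      intro m hm
      induction m, hm using Nat.le_induction with
      | base => exact le_of_lt hjlt
      | succ k hk ih =>
        have hPk : P k := hPup i k (le_trans (le_of_lt hij) hk) hPi
        calc F (k + 1) ≤ p * F k := hPk
        _ ≤ p * (F 0 * p ^ k) := mul_le_mul_of_nonneg_left ih hp0
        _ = F 0 * p ^ (k + 1) := by ring
    have hFs' : Summable (fun m : ℕ => F (m + (s + 1))) :=
      (summable_nat_add_iff (f := F) (s + 1)).mpr hFs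
    have hGs' : Summable (fun m : ℕ => F 0 * p ^ (m + (s + 1))) :=
      (summable_nat_add_iff (f := fun j : ℕ => F 0 * p ^ j) (s + 1)).mpr hGs
    have hFeq := Summable.sum_add_tsum_nat_add (s + 1) hFs
    have hGeq := Summable.sum_add_tsum_nat_add (s + 1) hGs
    have htle : ∑' m : ℕ, F (m + (s + 1)) ≤ ∑' m : ℕ, F 0 * p ^ (m + (s + 1)) :=
      Summable.tsum_le_tsum (fun m => htail (m + (s + 1)) (by omega)) hFs' hGs'
    linarith [hFeq, hGeq, hsum]

lemma aux_natAbs_neg_succ (n : ℕ) : (-((n : ℤ) + 1)).natAbs = n + 1 := by omega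

lemma aux_summable_twoSided (c p : ℝ) (hp0 : 0 ≤ p) (hp1 : p < 1) :
    Summable (fun k : ℤ => c * p ^ k.natAbs) := by
  apply Summable.of_nat_of_neg_add_one
  · simpa using (summable_geometric_of_lt_one hp0 hp1).mul_left c
  · have h2 : Summable (fun n : ℕ => c * p ^ (n + 1)) := by
      simpa [pow_succ, mul_comm, mul_assoc, mul_left_comm] using
        ((summable_geometric_of_lt_one hp0 hp1).mul_left (c * p))
    simp only [aux_natAbs_neg_succ]
    exact h2

lemma aux_tsum_twoSided (c p : ℝ) (hp0 : 0 ≤ p) (hp1 : p < 1) :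
    ∑' k : ℤ, c * p ^ k.natAbs = 2 * (c / (1 - p)) - c := by
  have hg : Summable (fun n : ℕ => c * p ^ n) := (summable_geometric_of_lt_one hp0 hp1).mul_left c
  have hgs : ∑' n : ℕ, c * p ^ n = c / (1 - p) := by
    rw [tsum_mul_left, tsum_geometric_of_lt_one hp0 hp1, div_eq_mul_inv]
  have hg2 : Summable (fun n : ℕ => c * p ^ (n + 1)) := by
    simpa [pow_succ, mul_comm, mul_assoc, mul_left_comm] using
      ((summable_geometric_of_lt_one hp0 hp1).mul_left (c * p))
  have h2 : ∑' n : ℕ, c * p ^ (n + 1) = c / (1 - p) - c := by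
    have := Summable.tsum_eq_zero_add hg
    simp only [pow_zero, mul_one] at this
    rw [hgs] at this
    linarith
  have key := tsum_of_nat_of_neg_add_one (f := fun k : ℤ => c * p ^ k.natAbs)
    (by simpa using hg) (by simp only [aux_natAbs_neg_succ]; exact hg2)
  rw [key]
  simp only [Int.natAbs_natCast, aux_natAbs_neg_succ]
  rw [hgs, h2]; ring

/-- Partial sums of the canonical symmetric rearrangement `k ↦ H ((k+1)/2)`. -/
lemma aux_sum_c (H : ℕ → ℝ) (n : ℕ) :
    ∑ k ∈ Finset.range (n + 1), H ((k + 1) / 2) =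
      (∑ j ∈ Finset.range ((n + 1) / 2 + 1), H j) +
      (∑ j ∈ Finset.range (n / 2 + 1), H j) - H 0 := by
  induction n with
  | zero => simp
  | succ m ih =>
    rw [Finset.sum_range_succ, ih]
    rcases Nat.even_or_odd m with ⟨k, hk⟩ | ⟨k, hk⟩ <;> subst hk
    · have h1 : (k + k + 1 + 1) / 2 = k + 1 := by omega
      have h2 : (k + k + 1) / 2 = k := by omega
      have h3 : (k + k) / 2 = k := by omega
      rw [h1, h2, h3, Finset.sum_range_succ (f := H) (n := k + 1)]
      ring
    · have h1 : (2 * k + 1 + 1 + 1) / 2 = k + 1 := by omega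
      have h2 : (2 * k + 1 + 1) / 2 = k + 1 := by omega
      have h3 : (2 * k + 1) / 2 = k := by omega
      rw [h1, h2, h3, Finset.sum_range_succ (f := H) (n := k + 1)]
      ring

/-- Lemma 7.1: any symmetric discrete log-concave probability function `f` on ℤ
majorizes the symmetric two-sided geometric distribution `g(k) = f(0)·p^{|k|}`
with the same maximum as `f`, where `p ∈ [0,1)` is the unique parameter making
`g` a probability function. -/
theorem symmetric_logConcave_majorizes_two_sided_geometric
    (f : ℤ → ℝ) (hprob : ∑' k : ℤ, f k = 1)
    (hlc : IsDiscreteLogConcavePMF f)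
    (hsym : ∀ k : ℤ, f (-k) = f k) :
    (∃! p : ℝ, (0 ≤ p ∧ p < 1) ∧ ∑' k : ℤ, f 0 * p ^ k.natAbs = 1) ∧
    (∀ p : ℝ, 0 ≤ p → p < 1 → (∑' k : ℤ, f 0 * p ^ k.natAbs) = 1 →
      Majorizes f (fun k => f 0 * p ^ k.natAbs)) := by
  obtain ⟨hnn, hint, hlc2⟩ := hlc
  -- basic facts
  have hsumm : Summable f := by
    by_contra hc
    rw [tsum_eq_zero_of_not_summable hc] at hprob
    norm_num at hprob
  have hex : ∃ k, 0 < f k := by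
    by_contra hc
    push_neg at hc
    have hz : ∀ k, f k = 0 := fun k => le_antisymm (hc k) (hnn k)
    rw [tsum_congr hz] at hprob
    simp at hprob
  have hf0pos : 0 < f 0 := by
    obtain ⟨k, hk⟩ := hex
    have hk' : 0 < f (k.natAbs : ℤ) := by
      rcases Int.natAbs_eq k with h | h
      · rwa [← h]
      · rw [show ((k.natAbs : ℤ)) = -k by omega, hsym]; exact hk
    have hk'' : 0 < f (-(k.natAbs : ℤ)) := by rw [hsym]; exact hk'
    exact hint (-(k.natAbs : ℤ)) 0 (k.natAbs : ℤ)
      (neg_nonpos.mpr (Int.natCast_nonneg _)) (Int.natCast_nonneg _) hk'' hk'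
  have hf0le1 : f 0 ≤ 1 := by
    have := Summable.le_tsum hsumm 0 (fun j _ => hnn j)
    rwa [hprob] at this
  -- the ℕ-indexed version of f
  set F : ℕ → ℝ := fun j => f (j : ℤ) with hF
  have hFnn : ∀ j, 0 ≤ F j := fun j => hnn _
  have hF0 : F 0 = f 0 := by simp [hF]
  have hsupp : ∀ j : ℕ, 0 < F (j + 1) → 0 < F j := by
    intro j hj
    have hj0 : 0 < f (((j + 1 : ℕ) : ℤ)) := hj
    rw [show ((j + 1 : ℕ) : ℤ) = (j : ℤ) + 1 by push_cast; ring] at hj0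
    exact hint 0 (j : ℤ) ((j : ℤ) + 1) (Int.natCast_nonneg _) (by linarith) hf0pos hj0
  have hFlc : ∀ j : ℕ, F j * F (j + 2) ≤ F (j + 1) ^ 2 := by
    intro j
    have := hlc2 ((j : ℤ) + 1)
    have e1 : (j : ℤ) + 1 - 1 = (j : ℤ) := by ring
    have e2 : ((j + 2 : ℕ) : ℤ) = (j : ℤ) + 1 + 1 := by push_cast; ring
    have e3 : ((j + 1 : ℕ) : ℤ) = (j : ℤ) + 1 := by push_cast; ring
    rw [e1] at this
    show f ((j : ℕ) : ℤ) * f ((j + 2 : ℕ) : ℤ) ≤ f ((j + 1 : ℕ) : ℤ) ^ 2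
    rw [e2, e3]
    exact this
  have hdec : ∀ j, F (j + 1) ≤ F j := by
    intro j
    induction j with
    | zero =>
      have h0 := hlc2 0
      rw [zero_sub, zero_add, hsym 1] at h0
      have h1 : F 1 = f 1 := by simp [hF]
      have h2 : F 0 = f 0 := hF0
      nlinarith [hnn 1, hf0pos, h0]
    | succ k ih =>
      rcases eq_or_lt_of_le (hFnn (k + 1)) with h0 | h0
      · have hle : ¬ 0 < F (k + 2) := by
          intro hpos
          have := hsupp (k + 1) hpos
          rw [← h0] at this
          exact lt_irrefl _ this
        push_neg at hle
        linarith
      · have hk0 : 0 < F k := hsupp k h0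
        have := hFlc k
        nlinarith [ih, h0, hk0]
  -- summability and total sum of F
  have hFsum : Summable F :=
    hsumm.comp_injective (fun a b hab => by simpa using hab)
  have hFsucc : Summable (fun n : ℕ => F (n + 1)) := (summable_nat_add_iff (f := F) 1).mpr hFsum
  have hTF : ∑' n : ℕ, F n = (1 + f 0) / 2 := by
    have e : (fun n : ℕ => f (-((n : ℤ) + 1))) = fun n : ℕ => F (n + 1) := by
      funext n
      rw [hsym]
      simp [hF]
    have key := tsum_of_nat_of_neg_add_one (f := f) hFsum (by rw [e]; exact hFsucc)
    rw [hprob] at key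
    have e2 : ∑' n : ℕ, f (-((n : ℤ) + 1)) = ∑' n : ℕ, F (n + 1) := by rw [e]
    have e3 : ∑' n : ℕ, F n = F 0 + ∑' n : ℕ, F (n + 1) := Summable.tsum_eq_zero_add hFsum
    have e4 : (∑' n : ℕ, f ((n : ℤ))) = ∑' n : ℕ, F n := rfl
    rw [e4, e2] at key
    rw [hF0] at e3
    linarith
  constructor
  · -- existence and uniqueness of p
    refine ⟨(1 - f 0) / (1 + f 0), ⟨⟨?_, ?_⟩, ?_⟩, ?_⟩
    · apply div_nonneg <;> linarith
    · rw [div_lt_one (by linarith)]; linarith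
    · rw [aux_tsum_twoSided _ _ (by apply div_nonneg <;> linarith)
        (by rw [div_lt_one (by linarith)]; linarith)]
      have hne1 : (1 : ℝ) + f 0 ≠ 0 := by linarith
      have hne2 : f 0 ≠ 0 := ne_of_gt hf0pos
      have h1 : (1 : ℝ) - (1 - f 0) / (1 + f 0) = 2 * f 0 / (1 + f 0) := by
        field_simp
        ring
      rw [h1]
      field_simp
      ring
    · intro q ⟨⟨hq0, hq1⟩, hqs⟩
      rw [aux_tsum_twoSided _ _ hq0 hq1] at hqs
      have h1q : (1 : ℝ) - q ≠ 0 := by linarith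
      field_simp at hqs
      rw [eq_div_iff (by linarith : (1 : ℝ) + f 0 ≠ 0)]
      linear_combination hqs
  · -- majorization
    intro p hp0 hp1 hpsum
    rw [aux_tsum_twoSided _ _ hp0 hp1] at hpsum
    have hGsum : Summable (fun j : ℕ => f 0 * p ^ j) :=
      (summable_geometric_of_lt_one hp0 hp1).mul_left _
    have hTG : ∑' n : ℕ, f 0 * p ^ n = (1 + f 0) / 2 := by
      rw [tsum_mul_left, tsum_geometric_of_lt_one hp0 hp1]
      have : f 0 / (1 - p) = (1 + f 0) / 2 := by linarith
      rw [← this, div_eq_mul_inv]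
    have hkey : ∀ s : ℕ, ∑ j ∈ Finset.range (s + 1), f 0 * p ^ j ≤
        ∑ j ∈ Finset.range (s + 1), F j := by
      intro s
      have := aux_key F p hp0 hFnn hsupp hFlc hFsum (by rw [hF0]; exact hGsum)
        (by rw [hF0, hTG, hTF]) s
      rw [hF0] at this
      exact this
    rintro fd gd ⟨hfd1, τf, hτf⟩ ⟨hgd1, τg, hτg⟩ n
    have habs : ∀ k : ℤ, f k = f (k.natAbs : ℤ) := by
      intro k
      rcases Int.natAbs_eq k with h | h
      · rw [← h]
      · rw [show ((k.natAbs : ℤ)) = -k by omega, hsym]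
    set cf : ℕ → ℝ := fun k => F ((k + 1) / 2) with hcf
    set cg : ℕ → ℝ := fun k => f 0 * p ^ ((k + 1) / 2) with hcg
    have hFanti : Antitone F := antitone_nat_of_succ_le hdec
    have hcf_anti : ∀ i, cf (i + 1) ≤ cf i := by
      intro i
      exact hFanti (by omega : (i + 1) / 2 ≤ (i + 1 + 1) / 2)
    have hcg_anti : ∀ i, cg (i + 1) ≤ cg i := by
      intro i
      exact mul_le_mul_of_nonneg_left
        (pow_le_pow_of_le_one hp0 hp1.le (by omega : (i + 1) / 2 ≤ (i + 1 + 1) / 2))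
        (le_of_lt hf0pos)
    have hcf_rep : ∀ i, cf i = f (auxNatIntEquiv i) := by
      intro i
      rw [habs (auxNatIntEquiv i), auxNatIntEquiv_natAbs]
    have hcg_rep : ∀ i, cg i = (fun k : ℤ => f 0 * p ^ k.natAbs) (auxNatIntEquiv i) := by
      intro i
      simp only [hcg, auxNatIntEquiv_natAbs]
    have h_gd_le : ∀ m, gd m ≤ cg m :=
      aux_rearrange_le (fun k : ℤ => f 0 * p ^ k.natAbs) gd cg hgd1 hcg_anti τg
        auxNatIntEquiv hτg hcg_rep
    have h_cf_le : ∀ m, cf m ≤ fd m :=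
      aux_rearrange_le f cf fd hcf_anti hfd1 auxNatIntEquiv τf hcf_rep hτf
    calc ∑ k ∈ Finset.range (n + 1), gd k
        ≤ ∑ k ∈ Finset.range (n + 1), cg k := Finset.sum_le_sum fun k _ => h_gd_le k
      _ ≤ ∑ k ∈ Finset.range (n + 1), cf k := by
          rw [show (fun k => cg k) = cg from rfl]
          have e1 : ∑ k ∈ Finset.range (n + 1), cg k =
              (∑ j ∈ Finset.range ((n + 1) / 2 + 1), f 0 * p ^ j) +
              (∑ j ∈ Finset.range (n / 2 + 1), f 0 * p ^ j) - f 0 * p ^ 0 :=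
            aux_sum_c (fun j => f 0 * p ^ j) n
          have e2 : ∑ k ∈ Finset.range (n + 1), cf k =
              (∑ j ∈ Finset.range ((n + 1) / 2 + 1), F j) +
              (∑ j ∈ Finset.range (n / 2 + 1), F j) - F 0 :=
            aux_sum_c F n
          rw [e1, e2, hF0]
          have k1 := hkey ((n + 1) / 2)
          have k2 := hkey (n / 2)
          simp only [pow_zero, mul_one]
          linarith
      _ ≤ ∑ k ∈ Finset.range (n + 1), fd k := Finset.sum_le_sum fun k _ => h_cf_le k
end

section
/- Let u : [0,∞) → [0,∞) be non-decreasing, and let X and Y be integer-valued random variables, each with a symmetric discrete log-concave distribution, with probability functions f_X and f_Y. If f_X majorizes f_Y, then E u(|X|) ≤ E u(|Y|). (Lemma 7.2: Schur-concavity of moment-type functionals on symmetric discrete log-concave distributions.) -/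
open MeasureTheory ProbabilityTheory Real

/-!
For monotone `g : ℕ → ℝ≥0∞` the layer-cake formula
`E g(|X|) = g 0 + ∑ⱼ (g (j + 1) - g j) P(|X| > j)` reduces the claim to
`P(|Y| ≤ j) ≤ P(|X| ≤ j)` for every `j`. Symmetry and log-concavity make a probability function
unimodal about `0`, so the zigzag enumeration `0, -1, 1, -2, 2, …` of `ℤ` is a decreasing
rearrangement of it, and its first `2j + 1` terms sum to `P(|X| ≤ j)`; majorization compares these
partial sums.
-/

open Finset ENNReal

section LayerCake

variable {Ω : Type*} [MeasurableSpace Ω]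

lemma Monotone.apply_eq_add_tsum_ite_tsub {g : ℕ → ℝ≥0∞} (hg : Monotone g) (n : ℕ) :
    g n = g 0 + ∑' j, if j < n then g (j + 1) - g j else 0 := by
  rw [tsum_eq_sum (s := range n) fun j hj => if_neg (by simpa using hj),
    sum_congr rfl fun j hj => if_pos (mem_range.mp hj)]
  induction n with
  | zero => simp
  | succ n ih => rw [sum_range_succ, ← add_assoc, ← ih, add_tsub_cancel_of_le (hg n.le_succ)]

lemma lintegral_comp_eq_tsum_tsub_mul_measure_lt (μ : Measure Ω) {N : Ω → ℕ}
    (hN : Measurable N) {g : ℕ → ℝ≥0∞} (hg : Monotone g) :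
    ∫⁻ ω, g (N ω) ∂μ = g 0 * μ Set.univ + ∑' j, (g (j + 1) - g j) * μ {ω | j < N ω} := by
  have hlt : ∀ j, MeasurableSet {ω | j < N ω} := fun j => hN measurableSet_Ioi
  calc ∫⁻ ω, g (N ω) ∂μ
      = ∫⁻ ω, g 0 + ∑' j, {ω | j < N ω}.indicator (fun _ => g (j + 1) - g j) ω ∂μ := by
        simp only [Set.indicator_apply, Set.mem_ofPred_eq, ← hg.apply_eq_add_tsum_ite_tsub]
    _ = _ := by
        rw [lintegral_add_left measurable_const, lintegral_const,
          lintegral_tsum fun j => (measurable_const.indicator (hlt j)).aemeasurable]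
        simp only [lintegral_indicator_const (hlt _)]

lemma lintegral_comp_le_of_measure_le_le {Ω' : Type*} [MeasurableSpace Ω'] {μ : Measure Ω}
    {ν : Measure Ω'} [IsProbabilityMeasure μ] [IsProbabilityMeasure ν] {M : Ω → ℕ} {N : Ω' → ℕ}
    (hM : Measurable M) (hN : Measurable N) {g : ℕ → ℝ≥0∞} (hg : Monotone g)
    (hcdf : ∀ j, ν {ω | N ω ≤ j} ≤ μ {ω | M ω ≤ j}) :
    ∫⁻ ω, g (M ω) ∂μ ≤ ∫⁻ ω, g (N ω) ∂ν := by
  rw [lintegral_comp_eq_tsum_tsub_mul_measure_lt μ hM hg,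
    lintegral_comp_eq_tsum_tsub_mul_measure_lt ν hN hg]
  gcongr with j
  · simp
  simp only [← not_le, ← Set.compl_ofPred]
  rw [prob_compl_eq_one_sub (measurableSet_le hM measurable_const),
    prob_compl_eq_one_sub (measurableSet_le hN measurable_const)]
  exact tsub_le_tsub_left (hcdf j) 1

end LayerCake

namespace Equiv

lemma intEquivNat_natCast (n : ℕ) : intEquivNat n = 2 * n := by
  simp only [intEquivNat, trans_apply, natSumNatEquivNat_apply]; rfl

lemma intEquivNat_negSucc (n : ℕ) : intEquivNat (Int.negSucc n) = 2 * n + 1 := by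
  simp only [intEquivNat, trans_apply, natSumNatEquivNat_apply]; rfl

lemma intEquivNat_symm_two_mul (n : ℕ) : intEquivNat.symm (2 * n) = n := by
  rw [symm_apply_eq, intEquivNat_natCast]

lemma intEquivNat_symm_two_mul_add_one (n : ℕ) :
    intEquivNat.symm (2 * n + 1) = -(n + 1 : ℤ) := by
  rw [symm_apply_eq, ← Int.negSucc_eq, intEquivNat_negSucc]

lemma intEquivNat_lt_two_mul_add_one_iff (k : ℤ) (j : ℕ) :
    intEquivNat k < 2 * j + 1 ↔ k.natAbs ≤ j := by
  rcases k with m | m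
  · rw [Int.ofNat_eq_natCast, intEquivNat_natCast, Int.natAbs_natCast]; omega
  · rw [intEquivNat_negSucc, Int.natAbs_negSucc]; omega

end Equiv

lemma Int.mem_Icc_neg_iff_natAbs_le (k : ℤ) (j : ℕ) : k ∈ Icc (-(j : ℤ)) j ↔ k.natAbs ≤ j := by
  rw [mem_Icc]; omega

lemma sum_range_intEquivNat_symm {M : Type*} [AddCommMonoid M] (f : ℤ → M) (j : ℕ) :
    ∑ i ∈ range (2 * j + 1), f (Equiv.intEquivNat.symm i) = ∑ k ∈ Icc (-(j : ℤ)) j, f k :=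
  sum_equiv Equiv.intEquivNat.symm
    (fun i => by
      rw [mem_range, Int.mem_Icc_neg_iff_natAbs_le, ← Equiv.intEquivNat_lt_two_mul_add_one_iff,
        Equiv.apply_symm_apply])
    fun _ _ => rfl

namespace IsDiscreteLogConcavePMF

variable {f : ℤ → ℝ}

lemma apply_succ_le_of_symm (hf : IsDiscreteLogConcavePMF f) (hsym : ∀ k, f (-k) = f k)
    (n : ℕ) : f (n + 1) ≤ f n := by
  obtain ⟨hnonneg, hinterval, hlc⟩ := hf
  induction n with
  | zero =>
    have h := hlc 0
    rw [zero_sub, zero_add, hsym] at h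
    push_cast
    nlinarith [hnonneg 0, hnonneg 1]
  | succ n ih =>
    push_cast at ih ⊢
    rcases (hnonneg (n + 1 + 1)).eq_or_lt with hzero | hpos
    · rw [← hzero]; exact hnonneg _
    -- the support is an interval containing `±(n + 2)`, hence `n`
    have hn : 0 < f n :=
      hinterval (-(n + 1 + 1)) n (n + 1 + 1) (by omega) (by omega) (by rwa [hsym]) hpos
    have h := hlc (n + 1)
    rw [add_sub_cancel_right] at h
    nlinarith [hnonneg (n + 1)]

lemma isDecreasingRearrangement_comp_intEquivNat_symm (hf : IsDiscreteLogConcavePMF f)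
    (hsym : ∀ k, f (-k) = f k) :
    IsDecreasingRearrangement f (f ∘ Equiv.intEquivNat.symm) := by
  refine ⟨fun i => ?_, Equiv.intEquivNat.symm, fun _ => rfl⟩
  obtain ⟨m, rfl | rfl⟩ := Nat.even_or_odd' i
  · simp only [Function.comp_apply, Equiv.intEquivNat_symm_two_mul_add_one,
      Equiv.intEquivNat_symm_two_mul, hsym]
    exact hf.apply_succ_le_of_symm hsym m
  · rw [show 2 * m + 1 + 1 = 2 * (m + 1) by ring]
    simp only [Function.comp_apply, Equiv.intEquivNat_symm_two_mul_add_one,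
      Equiv.intEquivNat_symm_two_mul, hsym]
    push_cast; rfl

end IsDiscreteLogConcavePMF

lemma Majorizes.sum_Icc_le {f g : ℤ → ℝ} (h : Majorizes f g) (hf : IsDiscreteLogConcavePMF f)
    (hfsym : ∀ k, f (-k) = f k) (hg : IsDiscreteLogConcavePMF g) (hgsym : ∀ k, g (-k) = g k)
    (j : ℕ) : ∑ k ∈ Icc (-(j : ℤ)) j, g k ≤ ∑ k ∈ Icc (-(j : ℤ)) j, f k := by
  simpa only [Function.comp_apply, sum_range_intEquivNat_symm] using
    h _ _ (hf.isDecreasingRearrangement_comp_intEquivNat_symm hfsym)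
      (hg.isDecreasingRearrangement_comp_intEquivNat_symm hgsym) (2 * j)

section Majorization

variable {Ω Ω' : Type*} [MeasurableSpace Ω] [MeasurableSpace Ω']

lemma toReal_measure_natAbs_le (μ : Measure Ω) [IsFiniteMeasure μ] {X : Ω → ℤ}
    (hX : Measurable X) (j : ℕ) :
    (μ {ω | (X ω).natAbs ≤ j}).toReal = ∑ k ∈ Icc (-(j : ℤ)) j, pmfOf μ X k := by
  simp only [pmfOf]
  rw [← toReal_sum fun _ _ => measure_ne_top _ _,
    sum_measure_preimage_singleton _ fun k _ => hX (measurableSet_singleton k)]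
  congr 2
  ext ω
  exact (Int.mem_Icc_neg_iff_natAbs_le _ _).symm

lemma measure_natAbs_le_le_of_majorizes {μ : Measure Ω} {ν : Measure Ω'}
    [IsFiniteMeasure μ] [IsFiniteMeasure ν] {X : Ω → ℤ} {Y : Ω' → ℤ}
    (hX : Measurable X) (hY : Measurable Y)
    (hXlc : IsDiscreteLogConcavePMF (pmfOf μ X)) (hXsym : ∀ k, pmfOf μ X (-k) = pmfOf μ X k)
    (hYlc : IsDiscreteLogConcavePMF (pmfOf ν Y)) (hYsym : ∀ k, pmfOf ν Y (-k) = pmfOf ν Y k)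
    (hmaj : Majorizes (pmfOf μ X) (pmfOf ν Y)) (j : ℕ) :
    ν {ω | (Y ω).natAbs ≤ j} ≤ μ {ω | (X ω).natAbs ≤ j} := by
  rw [← toReal_le_toReal (measure_ne_top _ _) (measure_ne_top _ _),
    toReal_measure_natAbs_le μ hX, toReal_measure_natAbs_le ν hY]
  exact hmaj.sum_Icc_le hXlc hXsym hYlc hYsym j

end Majorization

theorem schur_concavity_of_moments_general
    {Ω₁ Ω₂ : Type*} [MeasurableSpace Ω₁] [MeasurableSpace Ω₂]
    (μ : Measure Ω₁) (ν : Measure Ω₂) [IsProbabilityMeasure μ] [IsProbabilityMeasure ν]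
    (u : ℝ → ℝ)
    (humono : ∀ x y : ℝ, 0 ≤ x → x ≤ y → u x ≤ u y)
    (X : Ω₁ → ℤ) (Y : Ω₂ → ℤ) (hX : Measurable X) (hY : Measurable Y)
    (hXlc : IsDiscreteLogConcavePMF (pmfOf μ X))
    (hXsym : ∀ k : ℤ, pmfOf μ X (-k) = pmfOf μ X k)
    (hYlc : IsDiscreteLogConcavePMF (pmfOf ν Y))
    (hYsym : ∀ k : ℤ, pmfOf ν Y (-k) = pmfOf ν Y k)
    (hmaj : Majorizes (pmfOf μ X) (pmfOf ν Y)) :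
    ∫⁻ ω, ENNReal.ofReal (u |(X ω : ℝ)|) ∂μ ≤
      ∫⁻ ω, ENNReal.ofReal (u |(Y ω : ℝ)|) ∂ν := by
  set g : ℕ → ℝ≥0∞ := fun n => ENNReal.ofReal (u n)
  have hg : Monotone g := fun m n hmn =>
    ofReal_le_ofReal (humono _ _ m.cast_nonneg (Nat.cast_le.mpr hmn))
  have habs (k : ℤ) : ENNReal.ofReal (u |(k : ℝ)|) = g k.natAbs := by
    simp only [g, Nat.cast_natAbs, Int.cast_abs]
  simp only [habs]
  exact lintegral_comp_le_of_measure_le_le (M := fun ω => (X ω).natAbs)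
    (N := fun ω => (Y ω).natAbs) (by fun_prop) (by fun_prop) hg
    (measure_natAbs_le_le_of_majorizes hX hY hXlc hXsym hYlc hYsym hmaj)

/-- Lemma 7.2 (Schur-concavity of moments on symmetric log-concave distributions):
if `u : [0,∞) → [0,∞)` is non-decreasing and `X`, `Y` are symmetric discrete
log-concave integer-valued random variables whose probability function `f_X`
majorizes `f_Y`, then `E u(|X|) ≤ E u(|Y|)`. -/
theorem schur_concavity_of_moments
    {Ω₁ Ω₂ : Type*} [MeasurableSpace Ω₁] [MeasurableSpace Ω₂]
    (μ : Measure Ω₁) (ν : Measure Ω₂) [IsProbabilityMeasure μ] [IsProbabilityMeasure ν]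
    (u : ℝ → ℝ) (hu0 : ∀ x : ℝ, 0 ≤ x → 0 ≤ u x)
    (humono : ∀ x y : ℝ, 0 ≤ x → x ≤ y → u x ≤ u y)
    (X : Ω₁ → ℤ) (Y : Ω₂ → ℤ) (hX : Measurable X) (hY : Measurable Y)
    (hXlc : IsDiscreteLogConcavePMF (pmfOf μ X))
    (hXsym : ∀ k : ℤ, pmfOf μ X (-k) = pmfOf μ X k)
    (hYlc : IsDiscreteLogConcavePMF (pmfOf ν Y))
    (hYsym : ∀ k : ℤ, pmfOf ν Y (-k) = pmfOf ν Y k)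
    (hmaj : Majorizes (pmfOf μ X) (pmfOf ν Y)) :
    ∫⁻ ω, ENNReal.ofReal (u |(X ω : ℝ)|) ∂μ ≤
      ∫⁻ ω, ENNReal.ofReal (u |(Y ω : ℝ)|) ∂ν :=
  schur_concavity_of_moments_general μ ν u humono X Y hX hY hXlc hXsym hYlc hYsym hmaj
end

section
/- Let Ψ : [0,∞) → [0,∞) be a non-decreasing function, and let X be an integer-valued random variable with a symmetric discrete log-concave distribution and finite variance. Then M(X)·Ψ(Var(X)) ≤ sup_{0 ≤ p < 1} [ ((1-p)/(1+p)) · Ψ(2p/(1-p)^2) ]. (Proposition 7.3.) -/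
open MeasureTheory ProbabilityTheory Real

/-!
Let `M = f 0` be the mode of the symmetric log-concave probability function `f`, and choose
`p ∈ [0, 1)` with `M = (1 - p) / (1 + p)`, so that the two-sided geometric law `M p^|k|` has
mass one as well. On `ℕ`, log-concavity lets `f` cross the geometric sequence `M p^k` at most
once, and only from above to below. If `m` is the crossing point, every term of
`∑ (k² - m²) (M p^k - f k)` is non-negative, and equality of the masses turns this sum into
`∑ k² (M p^k - f k)`. Hence `Var X = 2 ∑ k² f k ≤ 2 ∑ k² M p^k = 2p / (1 - p)²`, and the
monotonicity of `Ψ` bounds `M Ψ(Var X)` by the term of the supremum at this `p`.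
-/

theorem hasSum_sq_mul_geometric_of_norm_lt_one {𝕜 : Type*} [NormedField 𝕜] [CompleteSpace 𝕜]
    {r : 𝕜} (hr : ‖r‖ < 1) :
    HasSum (fun n : ℕ => (n : 𝕜) ^ 2 * r ^ n) (r * (1 + r) / (1 - r) ^ 3) := by
  have h1r : 1 - r ≠ 0 := by
    intro h
    rw [sub_eq_zero] at h
    simp [← h] at hr
  have hterm : ∀ n : ℕ, (n : 𝕜) ^ 2 * r ^ n = 2 * (((n + 2).choose 2 : ℕ) * r ^ n)
      - 3 * (((n + 1).choose 1 : ℕ) * r ^ n) + ((n + 0).choose 0 : ℕ) * r ^ n := fun n => by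
    have hchoose : (n + 2).choose 2 * 2 = (n + 2) * (n + 1) := by
      rw [← Nat.add_one_mul_choose_eq, Nat.choose_one_right]
    have hchoose' := congrArg (Nat.cast : ℕ → 𝕜) hchoose
    push_cast at hchoose'
    simp only [Nat.choose_one_right, Nat.choose_zero_right]
    push_cast
    linear_combination (-r ^ n) * hchoose'
  have hvalue : r * (1 + r) / (1 - r) ^ 3 = 2 * (1 / (1 - r) ^ (2 + 1))
      - 3 * (1 / (1 - r) ^ (1 + 1)) + 1 / (1 - r) ^ (0 + 1) := by
    field_simp
    ring
  simp only [hterm, hvalue]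
  exact (((hasSum_choose_mul_geometric_of_norm_lt_one 2 hr).mul_left 2).sub
    ((hasSum_choose_mul_geometric_of_norm_lt_one 1 hr).mul_left 3)).add
    (hasSum_choose_mul_geometric_of_norm_lt_one 0 hr)

theorem HasSum.nat_of_even {g : ℤ → ℝ} {s : ℝ} (hg : HasSum g s) (heven : g.Even) :
    HasSum (fun n : ℕ => g n) ((s + g 0) / 2) := by
  simpa [heven.eq] using hg.nat_add_neg.div_const 2

theorem HasSum.eq_zero_of_odd {g : ℤ → ℝ} {s : ℝ} (hg : HasSum g s) (hodd : g.Odd) :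
    s = 0 := by
  have hpairs : HasSum (fun n : ℕ => g n + g (-n)) 0 := by simp [hodd.eq]
  simpa [hodd.map_zero] using hg.nat_add_neg.unique hpairs

theorem HasSum.nonneg_of_sub_mul_nonneg {ι : Type*} {w d : ι → ℝ} {s c : ℝ} (hd : HasSum d 0)
    (hwd : HasSum (fun i => w i * d i) s) (hsign : ∀ i, 0 ≤ (w i - c) * d i) : 0 ≤ s := by
  simpa [sub_mul] using (hwd.sub (hd.mul_left c)).nonneg (by simpa [sub_mul] using hsign)

theorem exists_sub_mul_nonneg_of_sign_change {w d : ℕ → ℝ} (hw : Monotone w) (hd : HasSum d 0)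
    (hcross : ∀ j k, j ≤ k → 0 < d j → 0 ≤ d k) : ∃ c, ∀ k, 0 ≤ (w k - c) * d k := by
  classical
  by_cases hpos : ∃ j, 0 < d j
  · refine ⟨w (Nat.find hpos), fun k => ?_⟩
    rcases lt_or_ge k (Nat.find hpos) with hk | hk
    · exact mul_nonneg_of_nonpos_of_nonpos (sub_nonpos.2 (hw hk.le))
        (not_lt.1 (Nat.find_min hpos hk))
    · exact mul_nonneg (sub_nonneg.2 (hw hk)) (hcross _ _ hk (Nat.find_spec hpos))
  · push Not at hpos
    have hzero : -d = 0 := (hasSum_zero_iff_of_nonneg fun k => neg_nonneg.2 (hpos k)).1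
      (by simpa using hd.neg)
    exact ⟨0, fun k => by simp [neg_eq_zero.1 hzero]⟩

structure IsLogConcaveSeq (a : ℕ → ℝ) : Prop where
  nonneg : ∀ k, 0 ≤ a k
  succ_eq_zero : ∀ k, a k = 0 → a (k + 1) = 0
  mul_le_sq : ∀ k, a k * a (k + 2) ≤ a (k + 1) ^ 2

namespace IsLogConcaveSeq

variable {a : ℕ → ℝ}

theorem eq_zero_of_le (ha : IsLogConcaveSeq a) {j k : ℕ} (hjk : j ≤ k) (hj : a j = 0) :
    a k = 0 := by
  induction k, hjk using Nat.le_induction with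
  | base => exact hj
  | succ k _ ih => exact ha.succ_eq_zero k ih

/-- The ratios `a (k + 1) / a k` are non-increasing, written without division. -/
theorem mul_succ_le_succ_mul (ha : IsLogConcaveSeq a) {j k : ℕ} (hjk : j ≤ k) :
    a j * a (k + 1) ≤ a (j + 1) * a k := by
  induction k, hjk using Nat.le_induction with
  | base => rw [mul_comm]
  | succ k _ ih =>
    rcases (ha.nonneg (k + 1)).eq_or_lt with hk1 | hk1
    · rw [ha.succ_eq_zero _ hk1.symm, ← hk1, mul_zero, mul_zero]
    · have hk0 : 0 < a k := (ha.nonneg k).lt_of_ne fun hk0 => hk1.ne' (ha.succ_eq_zero k hk0.symm)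
      refine le_of_mul_le_mul_right ?_ (mul_pos hk0 hk1)
      calc a j * a (k + 1 + 1) * (a k * a (k + 1))
          = a j * a (k + 1) * (a k * a (k + 2)) := by ring
        _ ≤ a (j + 1) * a k * a (k + 1) ^ 2 :=
          mul_le_mul ih (ha.mul_le_sq k) (mul_nonneg (ha.nonneg _) (ha.nonneg _))
            (mul_nonneg (ha.nonneg _) (ha.nonneg _))
        _ = a (j + 1) * a (k + 1) * (a k * a (k + 1)) := by ring

theorem antitone (ha : IsLogConcaveSeq a) (h10 : a 1 ≤ a 0) : Antitone a := by
  refine antitone_nat_of_succ_le fun k => ?_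
  rcases (ha.nonneg 0).eq_or_lt with h0 | h0
  · rw [ha.eq_zero_of_le (Nat.zero_le _) h0.symm, ha.eq_zero_of_le (Nat.zero_le _) h0.symm]
  · refine le_of_mul_le_mul_left ?_ h0
    calc a 0 * a (k + 1) ≤ a 1 * a k := ha.mul_succ_le_succ_mul (Nat.zero_le k)
      _ ≤ a 0 * a k := mul_le_mul_of_nonneg_right h10 (ha.nonneg k)

theorem le_geometric_of_lt {p : ℝ} (ha : IsLogConcaveSeq a) (hp : 0 ≤ p) {j k : ℕ} (hjk : j ≤ k)
    (hj : a j < a 0 * p ^ j) : a k ≤ a 0 * p ^ k := by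
  obtain ⟨i, hij, hi⟩ : ∃ i < j, a (i + 1) < p * a i := by
    by_contra! h
    exact (geom_le hp j h).not_gt (by rwa [mul_comm])
  have hai : 0 < a i := pos_of_mul_pos_right ((ha.nonneg _).trans_lt hi) hp
  have hstep : ∀ m, i ≤ m → a (m + 1) ≤ p * a m := fun m hm => by
    refine le_of_mul_le_mul_left ?_ hai
    calc a i * a (m + 1) ≤ a (i + 1) * a m := ha.mul_succ_le_succ_mul hm
      _ ≤ p * a i * a m := mul_le_mul_of_nonneg_right hi.le (ha.nonneg m)
      _ = a i * (p * a m) := by ring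
  obtain ⟨m, rfl⟩ := Nat.exists_eq_add_of_le hjk
  calc a (j + m) ≤ p ^ m * a j :=
        le_geom (u := fun l => a (j + l)) hp m fun l _ => hstep (j + l) (by omega)
    _ ≤ p ^ m * (a 0 * p ^ j) := by gcongr
    _ = a 0 * p ^ (j + m) := by ring

/-- The bound is `∑ k² a 0 p^k`, the second moment of the geometric sequence with the same first
term and, by `hsum`, the same mass. -/
theorem le_of_hasSum_sq_mul {p s : ℝ} (ha : IsLogConcaveSeq a) (hp0 : 0 ≤ p) (hp1 : p < 1)
    (hsum : HasSum a (a 0 / (1 - p))) (hsq : HasSum (fun k : ℕ => (k : ℝ) ^ 2 * a k) s) :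
    s ≤ a 0 * (p * (1 + p) / (1 - p) ^ 3) := by
  have hnorm : ‖p‖ < 1 := by rwa [Real.norm_of_nonneg hp0]
  have hgeom : HasSum (fun k => a 0 * p ^ k) (a 0 / (1 - p)) :=
    (hasSum_geometric_of_lt_one hp0 hp1).mul_left (a 0)
  have hgeom_sq : HasSum (fun k : ℕ => (k : ℝ) ^ 2 * (a 0 * p ^ k))
      (a 0 * (p * (1 + p) / (1 - p) ^ 3)) := by
    simpa only [mul_left_comm] using (hasSum_sq_mul_geometric_of_norm_lt_one hnorm).mul_left (a 0)
  have hd : HasSum (fun k => a 0 * p ^ k - a k) 0 := by simpa using hgeom.sub hsum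
  obtain ⟨c, hc⟩ := exists_sub_mul_nonneg_of_sign_change (w := fun k : ℕ => (k : ℝ) ^ 2)
    (fun j k hjk => pow_le_pow_left₀ (Nat.cast_nonneg j) (Nat.cast_le.2 hjk) 2) hd
    fun j k hjk hj => sub_nonneg.2 (ha.le_geometric_of_lt hp0 hjk (sub_pos.1 hj))
  have := hd.nonneg_of_sub_mul_nonneg (by simpa only [mul_sub] using hgeom_sq.sub hsq) hc
  linarith

end IsLogConcaveSeq

namespace IsDiscreteLogConcavePMF

variable {f : ℤ → ℝ}

theorem apply_zero_pos (hf : IsDiscreteLogConcavePMF f) (hsym : f.Even) {k : ℤ}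
    (hk : 0 < f k) : 0 < f 0 := by
  have hnegk : 0 < f (-k) := by rwa [hsym]
  rcases le_total 0 k with h | h
  · exact hf.2.1 (-k) 0 k (by omega) h hnegk hk
  · exact hf.2.1 k 0 (-k) h (by omega) hk hnegk

theorem isLogConcaveSeq_nat (hf : IsDiscreteLogConcavePMF f) (h0 : 0 < f 0) :
    IsLogConcaveSeq fun n : ℕ => f n where
  nonneg n := hf.1 n
  succ_eq_zero n hn := by
    by_contra hsucc
    have hpos := hf.2.1 0 n (n + 1) (by omega) (by omega) h0
      ((hf.1 _).lt_of_ne (Ne.symm (by exact_mod_cast hsucc)))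
    exact hpos.ne' hn
  mul_le_sq n := by simpa [add_assoc] using hf.2.2 (n + 1)

theorem iSup_eq_apply_zero (hf : IsDiscreteLogConcavePMF f) (hsym : f.Even) :
    ⨆ k, f k = f 0 := by
  have hle : ∀ k, f k ≤ f 0 := by
    intro k
    rcases (hf.1 k).eq_or_lt with hk | hk
    · exact hk ▸ hf.1 0
    have ha := hf.isLogConcaveSeq_nat (hf.apply_zero_pos hsym hk)
    have h10 : f 1 ≤ f 0 := by
      have h := hf.2.2 0
      rw [zero_sub, hsym, zero_add] at h
      exact (pow_le_pow_iff_left₀ (hf.1 1) (hf.1 0) two_ne_zero).1 (by nlinarith)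
    have hanti := ha.antitone (by simpa using h10) (Nat.zero_le k.natAbs)
    rcases Int.natAbs_eq k with h | h
    · rwa [h]
    · rwa [h, hsym]
  exact le_antisymm (ciSup_le hle) (le_ciSup ⟨f 0, Set.forall_mem_range.2 hle⟩ 0)

theorem exists_apply_zero_eq_and_second_moment_le (hf : IsDiscreteLogConcavePMF f) (hsym : f.Even)
    (hmass : HasSum f 1) {v : ℝ} (hsq : HasSum (fun k : ℤ => f k * (k : ℝ) ^ 2) v) :
    ∃ p ∈ Set.Ico (0 : ℝ) 1, f 0 = (1 - p) / (1 + p) ∧ v ≤ 2 * p / (1 - p) ^ 2 := by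
  set M := f 0 with hMdef
  have hM0 : 0 < M := by
    by_contra! h
    obtain ⟨k, hk⟩ : ∃ k, 0 < f k := by
      by_contra! hzero
      have hf0 : f = 0 := funext fun k => le_antisymm (hzero k) (hf.1 k)
      exact one_ne_zero (hmass.unique (hf0 ▸ hasSum_zero))
    exact h.not_gt (hf.apply_zero_pos hsym hk)
  have hM1 : M ≤ 1 := le_hasSum hmass 0 fun k _ => hf.1 k
  set p := (1 - M) / (1 + M) with hpdef
  have hp0 : 0 ≤ p := div_nonneg (by linarith) (by linarith)
  have hp1 : p < 1 := by rw [hpdef, div_lt_one (by linarith)]; linarith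
  have hMp : M = (1 - p) / (1 + p) := by
    rw [hpdef]
    field_simp
    ring
  refine ⟨p, ⟨hp0, hp1⟩, hMp, ?_⟩
  have hmass_nat : HasSum (fun n : ℕ => f n) (M / (1 - p)) := by
    convert hmass.nat_of_even hsym using 1
    rw [hpdef, ← hMdef]
    field_simp [hM0.ne']
    ring
  have hsq_nat : HasSum (fun n : ℕ => (n : ℝ) ^ 2 * f n) (v / 2) := by
    simpa [mul_comm] using hsq.nat_of_even fun k => by simp [hsym.eq]
  have := (hf.isLogConcaveSeq_nat hM0).le_of_hasSum_sq_mul hp0 hp1 hmass_nat hsq_nat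
  calc v = 2 * (v / 2) := by ring
    _ ≤ 2 * (M * (p * (1 + p) / (1 - p) ^ 3)) := by simpa using this
    _ = 2 * p / (1 - p) ^ 2 := by
      rw [hMp]
      field_simp

end IsDiscreteLogConcavePMF

theorem hasSum_pmfOf_mul {Ω : Type*} [MeasurableSpace Ω] {μ : Measure Ω} {X : Ω → ℤ}
    (hX : Measurable X) {g : ℤ → ℝ} (hg : Integrable (fun ω => g (X ω)) μ) :
    HasSum (fun k => pmfOf μ X k * g k) (∫ ω, g (X ω) ∂μ) := by
  have hfibers : ⋃ k, X ⁻¹' {k} = Set.univ := by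
    rw [← Set.preimage_iUnion, Set.iUnion_of_singleton, Set.preimage_univ]
  have h := hasSum_integral_iUnion (fun k => hX (measurableSet_singleton k))
    (pairwise_disjoint_fiber X) (by rw [hfibers]; exact hg.integrableOn)
  rw [hfibers, setIntegral_univ] at h
  refine h.congr_fun fun k => ?_
  rw [setIntegral_congr_fun (hX (measurableSet_singleton k)) fun ω hω => by rw [hω],
    setIntegral_const, smul_eq_mul, measureReal_def, pmfOf]

theorem maxProb_mul_psi_variance_le_general
    {Ω : Type*} [MeasurableSpace Ω] (μ : Measure Ω) [IsProbabilityMeasure μ]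
    (Ψ : ℝ → ℝ)
    (hΨmono : ∀ x y : ℝ, 0 ≤ x → x ≤ y → Ψ x ≤ Ψ y)
    (X : Ω → ℤ) (hX : Measurable X)
    (hlc : IsDiscreteLogConcavePMF (pmfOf μ X))
    (hsym : ∀ k : ℤ, pmfOf μ X (-k) = pmfOf μ X k)
    (hvar : MemLp (fun ω => (X ω : ℝ)) 2 μ) :
    ENNReal.ofReal (maxProb μ X * Ψ (variance (fun ω => (X ω : ℝ)) μ)) ≤
      ⨆ p : Set.Ico (0 : ℝ) 1,
        ENNReal.ofReal (((1 - (p : ℝ)) / (1 + (p : ℝ))) *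
          Ψ (2 * (p : ℝ) / (1 - (p : ℝ)) ^ 2)) := by
  have hmass : HasSum (pmfOf μ X) 1 := by
    simpa using hasSum_pmfOf_mul hX (g := fun _ => 1) (integrable_const (μ := μ) 1)
  have hmean : ∫ ω, (X ω : ℝ) ∂μ = 0 :=
    (hasSum_pmfOf_mul hX (hvar.integrable one_le_two)).eq_zero_of_odd fun k => by simp [hsym]
  have hvariance : variance (fun ω => (X ω : ℝ)) μ = ∫ ω, (X ω : ℝ) ^ 2 ∂μ := by
    simp [variance_eq_integral hvar.aestronglyMeasurable.aemeasurable, hmean]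
  obtain ⟨p, hp, hM, hvar_le⟩ := hlc.exists_apply_zero_eq_and_second_moment_le hsym hmass
    (hvariance ▸ hasSum_pmfOf_mul hX (g := fun k => (k : ℝ) ^ 2) hvar.integrable_sq)
  have hmax : maxProb μ X = (1 - p) / (1 + p) := by
    rw [maxProb, hlc.iSup_eq_apply_zero hsym, hM]
  have hM_nonneg : 0 ≤ (1 - p) / (1 + p) := div_nonneg (by linarith [hp.2]) (by linarith [hp.1])
  refine le_iSup_of_le ⟨p, hp⟩ (ENNReal.ofReal_le_ofReal ?_)
  rw [hmax]
  exact mul_le_mul_of_nonneg_left (hΨmono _ _ (variance_nonneg _ _) hvar_le) hM_nonneg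

/-- Proposition 7.3: for a non-decreasing `Ψ : [0,∞) → [0,∞)` and a symmetric
discrete log-concave integer-valued random variable `X` with finite variance,
`M(X)·Ψ(Var(X)) ≤ sup_{0 ≤ p < 1} ((1-p)/(1+p))·Ψ(2p/(1-p)²)`. -/
theorem maxProb_mul_psi_variance_le
    {Ω : Type*} [MeasurableSpace Ω] (μ : Measure Ω) [IsProbabilityMeasure μ]
    (Ψ : ℝ → ℝ) (hΨ0 : ∀ x : ℝ, 0 ≤ x → 0 ≤ Ψ x)
    (hΨmono : ∀ x y : ℝ, 0 ≤ x → x ≤ y → Ψ x ≤ Ψ y)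
    (X : Ω → ℤ) (hX : Measurable X)
    (hlc : IsDiscreteLogConcavePMF (pmfOf μ X))
    (hsym : ∀ k : ℤ, pmfOf μ X (-k) = pmfOf μ X k)
    (hvar : MemLp (fun ω => (X ω : ℝ)) 2 μ) :
    ENNReal.ofReal (maxProb μ X * Ψ (variance (fun ω => (X ω : ℝ)) μ)) ≤
      ⨆ p : Set.Ico (0 : ℝ) 1,
        ENNReal.ofReal (((1 - (p : ℝ)) / (1 + (p : ℝ))) *
          Ψ (2 * (p : ℝ) / (1 - (p : ℝ)) ^ 2)) :=
  maxProb_mul_psi_variance_le_general μ Ψ hΨmono X hX hlc hsym hvar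
end

section
/- Let X be any real-valued random variable with finite variance. Then for every λ > 0, the concentration function satisfies Q(X; λ) ≥ λ/√(λ^2 + 12·Var(X)). (Proposition 8.2.) -/
/-!
Put `f x = P(X ≤ x < X + λ)`, so that `f / λ` is the density of `X + U` with `U` uniform on
`[0, λ)` and independent of `X`. Every value of `f` is at most `Q = Q(X; λ)`, `∫ f = λ`, and by
Tonelli, with `c = E X + λ / 2`, the second moment `∫ (x - c)² f(x) dx` equals `λ Var X + λ³ / 12`.
By the bathtub principle, a function `0 ≤ f ≤ Q` of mass `λ` has second moment about `c` at least
that of `Q` times the indicator of the interval of length `λ / Q` centred at `c`, namely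
`λ³ / (12 Q²)`. So `λ³ ≤ 12 Q² (λ Var X + λ³ / 12)`, which rearranges to the claim.
-/

open MeasureTheory ProbabilityTheory Real

/-- The concentration function `Q(X;λ) = sup_x P{x ≤ X ≤ x + λ}`. -/
noncomputable def concentration {Ω : Type*} [MeasurableSpace Ω] (μ : Measure Ω)
    (X : Ω → ℝ) (lam : ℝ) : ℝ :=
  ⨆ x : ℝ, (μ {ω | x ≤ X ω ∧ X ω ≤ x + lam}).toReal

open Set
open scoped ENNReal

theorem ENNReal.mul_add_mul_le_mul_add_mul {a b c d : ℝ≥0∞} (hab : a ≤ b) (hcd : c ≤ d) :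
    a * d + b * c ≤ a * c + b * d := by
  obtain ⟨b, rfl⟩ := exists_add_of_le hab
  obtain ⟨d, rfl⟩ := exists_add_of_le hcd
  calc a * (c + d) + (a + b) * c ≤ a * (c + d) + (a + b) * c + b * d := le_self_add
    _ = a * c + (a + b) * (c + d) := by ring

theorem lintegral_Ico_sq_sub {a b : ℝ} (hab : a ≤ b) (c : ℝ) :
    ∫⁻ x in Ico a b, ENNReal.ofReal ((x - c) ^ 2) =
      ENNReal.ofReal (((b - c) ^ 3 - (a - c) ^ 3) / 3) := by
  have hint : IntegrableOn (fun x => (x - c) ^ 2) (Ioc a b) :=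
    (by fun_prop : Continuous fun x : ℝ => (x - c) ^ 2).integrableOn_Ioc
  rw [setLIntegral_congr Ico_ae_eq_Ioc,
    ← ofReal_integral_eq_lintegral_ofReal hint (.of_forall fun x => sq_nonneg _),
    ← intervalIntegral.integral_of_le hab,
    intervalIntegral.integral_comp_sub_right (fun x => x ^ 2) c, integral_pow]
  norm_num

/-- Integral of the pointwise bathtub inequality
`(a² - (x - c)²) (f x - q 1_{|x - c| < a}) ≤ 0`. -/
theorem ofReal_sq_mul_lintegral_add_le {f : ℝ → ℝ≥0∞} (hf : Measurable f) {q : ℝ≥0∞}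
    (hfq : ∀ x, f x ≤ q) (c : ℝ) {a : ℝ} (ha : 0 ≤ a) :
    ENNReal.ofReal (a ^ 2) * (∫⁻ x, f x) + ENNReal.ofReal (2 * a ^ 3 / 3) * q ≤
      (∫⁻ x, ENNReal.ofReal ((x - c) ^ 2) * f x) + ENNReal.ofReal (2 * a ^ 3) * q := by
  set I := Ico (c - a) (c + a)
  have hpt : ∀ x, ENNReal.ofReal (a ^ 2) * f x
        + I.indicator (fun x => ENNReal.ofReal ((x - c) ^ 2) * q) x
      ≤ ENNReal.ofReal ((x - c) ^ 2) * f x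
        + I.indicator (fun _ => ENNReal.ofReal (a ^ 2) * q) x := by
    intro x
    by_cases hx : x ∈ I
    · rw [indicator_of_mem hx, indicator_of_mem hx, add_comm]
      have hxa : (x - c) ^ 2 ≤ a ^ 2 := sq_le_sq' (by linarith [hx.1]) (by linarith [hx.2])
      exact ENNReal.mul_add_mul_le_mul_add_mul (ENNReal.ofReal_le_ofReal hxa) (hfq x)
    · rw [indicator_of_notMem hx, indicator_of_notMem hx, add_zero, add_zero]
      have hxa : a ^ 2 ≤ (x - c) ^ 2 := by
        rcases not_and_or.1 hx with h | h <;> nlinarith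
      gcongr
  have hI : ∫⁻ x in I, ENNReal.ofReal ((x - c) ^ 2) = ENNReal.ofReal (2 * a ^ 3 / 3) := by
    rw [lintegral_Ico_sq_sub (by linarith)]
    congr 1
    ring
  calc _ = ∫⁻ x, (ENNReal.ofReal (a ^ 2) * f x
          + I.indicator (fun x => ENNReal.ofReal ((x - c) ^ 2) * q) x) := by
        rw [lintegral_add_left (hf.const_mul _), lintegral_const_mul _ hf,
          lintegral_indicator measurableSet_Ico, lintegral_mul_const _ (by fun_prop), hI]
    _ ≤ _ := lintegral_mono hpt
    _ = _ := by
        rw [lintegral_add_left (by fun_prop), lintegral_indicator_const measurableSet_Ico,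
          Real.volume_Ico, mul_assoc, mul_comm q, ← mul_assoc, ← ENNReal.ofReal_mul (sq_nonneg a),
          show a ^ 2 * (c + a - (c - a)) = 2 * a ^ 3 by ring]

theorem ofReal_pow_three_le_mul_lintegral_sq_sub_mul {f : ℝ → ℝ≥0∞} (hf : Measurable f)
    {q m : ℝ} (hfq : ∀ x, f x ≤ ENNReal.ofReal q) (hm : 0 < m)
    (hmass : ∫⁻ x, f x = ENNReal.ofReal m) (c : ℝ) :
    ENNReal.ofReal (m ^ 3) ≤
      ENNReal.ofReal (12 * q ^ 2) * ∫⁻ x, ENNReal.ofReal ((x - c) ^ 2) * f x := by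
  have hq : 0 < q := by
    by_contra! hq
    have hf0 : ∀ x, f x = 0 := fun x =>
      le_antisymm ((hfq x).trans (ENNReal.ofReal_of_nonpos hq).le) zero_le
    simp only [hf0, lintegral_zero] at hmass
    linarith [ENNReal.ofReal_eq_zero.1 hmass.symm]
  set a := m / (2 * q) with ha
  have hm_eq : m = 2 * q * a := by rw [ha]; field_simp
  have hbath := ofReal_sq_mul_lintegral_add_le hf hfq c (a := a) (by positivity)
  have hcancel : ENNReal.ofReal (a ^ 2) * ENNReal.ofReal m =
      ENNReal.ofReal (2 * a ^ 3) * ENNReal.ofReal q := by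
    rw [← ENNReal.ofReal_mul (by positivity), ← ENNReal.ofReal_mul (by positivity), hm_eq]
    congr 1
    ring
  rw [hmass, hcancel, add_comm (_ * _ : ℝ≥0∞) (ENNReal.ofReal _ * _),
    ENNReal.add_le_add_iff_right (by finiteness)] at hbath
  calc ENNReal.ofReal (m ^ 3)
      = ENNReal.ofReal (12 * q ^ 2) * (ENNReal.ofReal (2 * a ^ 3 / 3) * ENNReal.ofReal q) := by
        rw [← ENNReal.ofReal_mul (by positivity), ← ENNReal.ofReal_mul (by positivity), hm_eq]
        congr 1
        ring
    _ ≤ _ := by gcongr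

section smoothedMass

variable {Ω : Type*} [MeasurableSpace Ω]

noncomputable def smoothedMass (μ : Measure Ω) (X : Ω → ℝ) (lam x : ℝ) : ℝ≥0∞ :=
  μ {ω | x ∈ Ico (X ω) (X ω + lam)}

theorem measureReal_le_concentration (μ : Measure Ω) [IsFiniteMeasure μ] (X : Ω → ℝ)
    (lam x : ℝ) : μ.real {ω | x ≤ X ω ∧ X ω ≤ x + lam} ≤ concentration μ X lam :=
  le_ciSup (f := fun x => μ.real {ω | x ≤ X ω ∧ X ω ≤ x + lam})
    ⟨μ.real univ, by rintro _ ⟨y, rfl⟩; exact measureReal_mono (subset_univ _)⟩ x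

theorem smoothedMass_le_concentration (μ : Measure Ω) [IsFiniteMeasure μ] (X : Ω → ℝ)
    (lam x : ℝ) : smoothedMass μ X lam x ≤ ENNReal.ofReal (concentration μ X lam) :=
  calc smoothedMass μ X lam x ≤ μ {ω | x - lam ≤ X ω ∧ X ω ≤ x - lam + lam} :=
        measure_mono fun ω ⟨h₁, h₂⟩ => ⟨by linarith, by linarith⟩
    _ = ENNReal.ofReal (μ.real {ω | x - lam ≤ X ω ∧ X ω ≤ x - lam + lam}) :=
        (ENNReal.ofReal_toReal (measure_ne_top _ _)).symm
    _ ≤ _ := ENNReal.ofReal_le_ofReal (measureReal_le_concentration μ X lam (x - lam))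

theorem measurableSet_mem_Ico_prod {X : Ω → ℝ} (hX : Measurable X) (lam : ℝ) :
    MeasurableSet {p : ℝ × Ω | p.1 ∈ Ico (X p.2) (X p.2 + lam)} :=
  (measurableSet_le (hX.comp measurable_snd) measurable_fst).inter
    (measurableSet_lt measurable_fst ((hX.comp measurable_snd).add_const lam))

variable (μ : Measure Ω) {X : Ω → ℝ}

theorem measurable_smoothedMass [SFinite μ] (hX : Measurable X) (lam : ℝ) :
    Measurable (smoothedMass μ X lam) :=
  measurable_measure_prodMk_left (measurableSet_mem_Ico_prod hX lam)

theorem lintegral_mul_smoothedMass [SFinite μ] (hX : Measurable X) (lam : ℝ) {w : ℝ → ℝ≥0∞}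
    (hw : Measurable w) :
    ∫⁻ x, w x * smoothedMass μ X lam x = ∫⁻ ω, (∫⁻ x in Ico (X ω) (X ω + lam), w x) ∂μ := by
  have hS := measurableSet_mem_Ico_prod hX lam
  calc ∫⁻ x, w x * smoothedMass μ X lam x
      = ∫⁻ x, ∫⁻ ω, (Ico (X ω) (X ω + lam)).indicator w x ∂μ :=
        lintegral_congr fun x => (lintegral_indicator_const (measurable_prodMk_left hS) (w x)).symm
    _ = ∫⁻ ω, (∫⁻ x in Ico (X ω) (X ω + lam), w x) ∂μ := by
        rw [lintegral_lintegral_swap (f := fun x ω => (Ico (X ω) (X ω + lam)).indicator w x)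
          ((hw.comp measurable_fst).indicator hS).aemeasurable]
        simp_rw [lintegral_indicator measurableSet_Ico]

variable [IsProbabilityMeasure μ]

theorem lintegral_smoothedMass (hX : Measurable X) (lam : ℝ) :
    ∫⁻ x, smoothedMass μ X lam x = ENNReal.ofReal lam := by
  simpa [Real.volume_Ico] using lintegral_mul_smoothedMass μ hX lam measurable_one

theorem lintegral_sq_sub_mul_smoothedMass (hX : Measurable X) (hvar : MemLp X 2 μ) {lam : ℝ}
    (hlam : 0 ≤ lam) :
    ∫⁻ x, ENNReal.ofReal ((x - (μ[X] + lam / 2)) ^ 2) * smoothedMass μ X lam x =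
      ENNReal.ofReal (lam * variance X μ + lam ^ 3 / 12) := by
  have hsq : Integrable (fun ω => (X ω - μ[X]) ^ 2) μ := (hvar.sub (memLp_const _)).integrable_sq
  have hint : Integrable (fun ω => lam * (X ω - μ[X]) ^ 2 + lam ^ 3 / 12) μ :=
    (hsq.const_mul lam).add (integrable_const _)
  have hinner : ∀ ω,
      ∫⁻ x in Ico (X ω) (X ω + lam), ENNReal.ofReal ((x - (μ[X] + lam / 2)) ^ 2) =
        ENNReal.ofReal (lam * (X ω - μ[X]) ^ 2 + lam ^ 3 / 12) := fun ω => by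
    rw [lintegral_Ico_sq_sub (by linarith)]
    congr 1
    ring
  rw [lintegral_mul_smoothedMass μ hX lam (by fun_prop), lintegral_congr hinner,
    ← ofReal_integral_eq_lintegral_ofReal hint (.of_forall fun ω => by positivity),
    integral_add (hsq.const_mul lam) (integrable_const _), integral_const_mul, integral_const,
    ← variance_eq_integral hX.aemeasurable]
  simp

end smoothedMass

/-- Proposition 8.2: for any real-valued random variable `X` with finite variance
and any `λ > 0`, `Q(X;λ) ≥ λ/√(λ² + 12·Var(X))`. -/
theorem concentration_lower_bound
    {Ω : Type*} [MeasurableSpace Ω] (μ : Measure Ω) [IsProbabilityMeasure μ]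
    (X : Ω → ℝ) (hX : Measurable X)
    (hvar : MemLp X 2 μ)
    (lam : ℝ) (hlam : 0 < lam) :
    lam / Real.sqrt (lam ^ 2 + 12 * variance X μ) ≤ concentration μ X lam := by
  set q := concentration μ X lam
  have hq : 0 ≤ q := measureReal_nonneg.trans (measureReal_le_concentration μ X lam 0)
  have hV : 0 ≤ variance X μ := variance_nonneg X μ
  have hcube := ofReal_pow_three_le_mul_lintegral_sq_sub_mul (measurable_smoothedMass μ hX lam)
    (smoothedMass_le_concentration μ X lam) hlam (lintegral_smoothedMass μ hX lam) (μ[X] + lam / 2)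
  rw [lintegral_sq_sub_mul_smoothedMass μ hX hvar hlam.le, ← ENNReal.ofReal_mul (by positivity),
    ENNReal.ofReal_le_ofReal_iff (by positivity)] at hcube
  have hsq : lam ^ 2 ≤ (q * √(lam ^ 2 + 12 * variance X μ)) ^ 2 := by
    rw [mul_pow, Real.sq_sqrt (by positivity)]
    refine le_of_mul_le_mul_left ?_ hlam
    linear_combination hcube
  rw [div_le_iff₀ (by positivity)]
  exact (pow_le_pow_iff_left₀ hlam.le (by positivity) two_ne_zero).1 hsq
end
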